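/- arXiv:2508.04518 — 11 statements merged into one kernel-verified Lean document; each statement's English description precedes it below -/
import Mathlib

section
/- Let G be a connected simple graph, let e be an edge of G, and let G' be the graph obtained from G by deleting the edge e. If G' is connected, then M1(G') < M1(G), M2(G') < M2(G), Π_{1,c}(G') < Π_{1,c}(G) for every c > 0, and Π2(G') < Π2(G). -/
open scoped Classical

/-- The first Zagreb index: sum of squared vertex degrees. -/
noncomputable def M1 {V : Type*} [Fintype V] (G : SimpleGraph V) : ℝ :=
  ∑ v, (G.degree v : ℝ) ^ 2

/-- The second Zagreb index: sum over edges of the product of endpoint degrees. -/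
noncomputable def M2 {V : Type*} [Fintype V] (G : SimpleGraph V) : ℝ :=
  ∑ e ∈ G.edgeFinset,
    Sym2.lift ⟨fun u v => (G.degree u : ℝ) * (G.degree v : ℝ),
      fun _ _ => mul_comm _ _⟩ e

/-- The first generalized multiplicative Zagreb index with real parameter `c`. -/
noncomputable def P1 {V : Type*} [Fintype V] (G : SimpleGraph V) (c : ℝ) : ℝ :=
  ∏ v, (G.degree v : ℝ) ^ c

/-- The second multiplicative Zagreb index: product over edges of the product of
endpoint degrees. -/
noncomputable def P2 {V : Type*} [Fintype V] (G : SimpleGraph V) : ℝ :=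
  ∏ e ∈ G.edgeFinset,
    Sym2.lift ⟨fun u v => (G.degree u : ℝ) * (G.degree v : ℝ),
      fun _ _ => mul_comm _ _⟩ e

/-- Every vertex of a connected graph on a nontrivial vertex type has positive degree. -/
lemma conn_degree_pos {V : Type*} [Fintype V] [Nontrivial V] (H : SimpleGraph V)
    [DecidableRel H.Adj] (hH : H.Connected) (w : V) : 0 < H.degree w := by
  obtain ⟨w', hw'⟩ := exists_ne w
  obtain ⟨p⟩ := hH.preconnected w w'
  have hnil : ¬ p.Nil := SimpleGraph.Walk.not_nil_of_ne hw'.symm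
  rw [SimpleGraph.degree_pos_iff_exists_adj]
  exact ⟨_, SimpleGraph.Walk.adj_snd hnil⟩

theorem stmt0 {V : Type*} [Fintype V] (G : SimpleGraph V) (e : Sym2 V)
    (he : e ∈ G.edgeSet) (hG : G.Connected)
    (hG' : (G.deleteEdges {e}).Connected) :
    M1 (G.deleteEdges {e}) < M1 G ∧
    M2 (G.deleteEdges {e}) < M2 G ∧
    (∀ c : ℝ, 0 < c → P1 (G.deleteEdges {e}) c < P1 G c) ∧
    P2 (G.deleteEdges {e}) < P2 G := by
  induction e using Sym2.ind with
  | _ u v =>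
  set G' := G.deleteEdges {s(u, v)} with hG'def
  letI : DecidableRel G'.Adj := fun a b => Classical.propDecidable (G'.Adj a b)
  have hadj : G.Adj u v := he
  have hne : u ≠ v := hadj.ne
  have : Nontrivial V := ⟨u, v, hne⟩
  -- degrees in G' are at most degrees in G
  have hnsub : ∀ w : V, G'.neighborFinset w ⊆ G.neighborFinset w := by
    intro w x hx
    rw [SimpleGraph.mem_neighborFinset] at hx ⊢
    exact hx.1
  have hle : ∀ w : V, G'.degree w ≤ G.degree w := fun w =>
    Finset.card_le_card (hnsub w)
  -- the degree of u strictly decreases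
  have hltu : G'.degree u < G.degree u := by
    apply Finset.card_lt_card
    refine ⟨hnsub u, fun hsub => ?_⟩
    have hv : v ∈ G.neighborFinset u := by
      rw [SimpleGraph.mem_neighborFinset]; exact hadj
    have := hsub hv
    rw [SimpleGraph.mem_neighborFinset, SimpleGraph.deleteEdges_adj] at this
    exact this.2 rfl
  -- degrees in G' are positive
  have hpos' : ∀ w : V, 0 < G'.degree w := fun w => conn_degree_pos G' hG' w
  have hpos : ∀ w : V, 0 < G.degree w := fun w => lt_of_lt_of_le (hpos' w) (hle w)
  -- edge set of G'
  have hEF : G'.edgeFinset = G.edgeFinset.erase s(u, v) := by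
    ext f
    simp only [SimpleGraph.mem_edgeFinset, Finset.mem_erase, hG'def,
      SimpleGraph.edgeSet_deleteEdges, Set.mem_diff, Set.mem_singleton_iff]
    tauto
  have heE : s(u, v) ∈ G.edgeFinset := SimpleGraph.mem_edgeFinset.2 he
  set F : Sym2 V → ℝ := Sym2.lift ⟨fun a b => (G.degree a : ℝ) * (G.degree b : ℝ),
      fun _ _ => mul_comm _ _⟩ with hF
  set F' : Sym2 V → ℝ := Sym2.lift ⟨fun a b => (G'.degree a : ℝ) * (G'.degree b : ℝ),
      fun _ _ => mul_comm _ _⟩ with hF'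
  have hF'leF : ∀ f : Sym2 V, F' f ≤ F f := by
    intro f
    induction f using Sym2.ind with
    | _ a b =>
      simp only [hF, hF', Sym2.lift_mk]
      exact mul_le_mul (by exact_mod_cast hle a) (by exact_mod_cast hle b)
        (by positivity) (by positivity)
  have hFpos : ∀ f : Sym2 V, 0 < F f := by
    intro f
    induction f using Sym2.ind with
    | _ a b =>
      simp only [hF, Sym2.lift_mk]
      have := hpos a; have := hpos b
      positivity
  have hF'pos : ∀ f : Sym2 V, 0 < F' f := by
    intro f
    induction f using Sym2.ind with
    | _ a b =>
      simp only [hF', Sym2.lift_mk]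
      have := hpos' a; have := hpos' b
      positivity
  have hFe : (2 : ℝ) ≤ F s(u, v) := by
    simp only [hF, Sym2.lift_mk]
    have h2 : 2 ≤ G.degree u := by
      have := hpos' u; omega
    have h1 : 1 ≤ G.degree v := hpos v
    calc (2 : ℝ) = 2 * 1 := by ring
    _ ≤ (G.degree u : ℝ) * (G.degree v : ℝ) := by
        exact mul_le_mul (by exact_mod_cast h2) (by exact_mod_cast h1)
          zero_le_one (by positivity)
  refine ⟨?_, ?_, ?_, ?_⟩
  · -- M1
    unfold M1
    apply Finset.sum_lt_sum
    · intro w _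
      exact pow_le_pow_left₀ (by positivity) (by exact_mod_cast hle w) 2
    · exact ⟨u, Finset.mem_univ u,
        pow_lt_pow_left₀ (by exact_mod_cast hltu) (by positivity) (by norm_num)⟩
  · -- M2
    unfold M2
    rw [hEF]
    calc ∑ f ∈ G.edgeFinset.erase s(u, v), F' f
        ≤ ∑ f ∈ G.edgeFinset.erase s(u, v), F f :=
          Finset.sum_le_sum fun f _ => hF'leF f
      _ < F s(u, v) + ∑ f ∈ G.edgeFinset.erase s(u, v), F f := by
          have := hFpos s(u, v); linarith
      _ = ∑ f ∈ G.edgeFinset, F f := Finset.add_sum_erase _ F heE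
  · -- P1
    intro c hc
    unfold P1
    apply Finset.prod_lt_prod
    · intro w _
      exact Real.rpow_pos_of_pos (by exact_mod_cast hpos' w) c
    · intro w _
      exact Real.rpow_le_rpow (by positivity) (by exact_mod_cast hle w) hc.le
    · exact ⟨u, Finset.mem_univ u,
        Real.rpow_lt_rpow (by positivity) (by exact_mod_cast hltu) hc⟩
  · -- P2
    unfold P2
    rw [hEF]
    have hprodpos : 0 < ∏ f ∈ G.edgeFinset.erase s(u, v), F f :=
      Finset.prod_pos fun f _ => hFpos f
    calc ∏ f ∈ G.edgeFinset.erase s(u, v), F' f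
        ≤ ∏ f ∈ G.edgeFinset.erase s(u, v), F f :=
          Finset.prod_le_prod (fun f _ => (hF'pos f).le) (fun f _ => hF'leF f)
      _ < F s(u, v) * ∏ f ∈ G.edgeFinset.erase s(u, v), F f := by
          nlinarith
      _ = ∏ f ∈ G.edgeFinset, F f := Finset.mul_prod_erase _ F heE
end

section
/- Let G be a connected simple graph possessing (as a subgraph) a cycle Z of size t, and let e_1, e_2, …, e_t be the edges of G belonging to Z. Let G' be obtained from G by deleting the edges e_1, e_2, …, e_t. If G' is connected, then M1(G') < M1(G), M2(G') < M2(G), Π_{1,c}(G') < Π_{1,c}(G) for every c > 0, and Π2(G') < Π2(G). -/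
open scoped Classical

theorem stmt1 {V : Type*} [Fintype V] (G : SimpleGraph V) (hG : G.Connected)
    (t : ℕ) (v : V) (Z : G.Walk v v) (hZ : Z.IsCycle) (ht : Z.length = t)
    (hG' : (G.deleteEdges {e | e ∈ Z.edges}).Connected) :
    M1 (G.deleteEdges {e | e ∈ Z.edges}) < M1 G ∧
    M2 (G.deleteEdges {e | e ∈ Z.edges}) < M2 G ∧
    (∀ c : ℝ, 0 < c → P1 (G.deleteEdges {e | e ∈ Z.edges}) c < P1 G c) ∧
    P2 (G.deleteEdges {e | e ∈ Z.edges}) < P2 G := by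
  classical
  set G' := G.deleteEdges {e | e ∈ Z.edges} with hG'def
  have hle : G' ≤ G := SimpleGraph.deleteEdges_le _
  -- degrees in G' are at most degrees in G
  have hdle : ∀ u, G'.degree u ≤ G.degree u := by
    intro u
    apply Finset.card_le_card
    intro x hx
    rw [SimpleGraph.mem_neighborFinset] at hx ⊢
    exact hle hx
  -- pick the first edge of the cycle, incident to v
  obtain ⟨w, hadj, hew⟩ : ∃ w, G.Adj v w ∧ s(v, w) ∈ Z.edges := by
    cases Z with
    | nil => exact absurd hZ SimpleGraph.Walk.IsCycle.not_of_nil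
    | cons h p => exact ⟨_, h, by simp⟩
  have hnadj : ¬ G'.Adj v w := by
    rw [hG'def, SimpleGraph.deleteEdges_adj]
    simp [hew]
  -- strict degree drop at v
  have hvlt : G'.degree v < G.degree v := by
    apply Finset.card_lt_card
    constructor
    · intro x hx
      rw [SimpleGraph.mem_neighborFinset] at hx ⊢
      exact hle hx
    · intro hsub
      have := hsub ((SimpleGraph.mem_neighborFinset G v w).2 hadj)
      rw [SimpleGraph.mem_neighborFinset] at this
      exact hnadj this
  -- every vertex has positive degree in G'
  have hdpos : ∀ u, 0 < G'.degree u := by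
    intro u
    rw [SimpleGraph.degree_pos_iff_exists_adj G' u]
    have hvw : v ≠ w := hadj.ne
    have : ∃ z, z ≠ u := by
      by_cases h : u = v
      · exact ⟨w, fun hw => hvw (h ▸ hw.symm)⟩
      · exact ⟨v, fun hv => h hv.symm⟩
    obtain ⟨z, hz⟩ := this
    obtain ⟨p⟩ := hG'.preconnected u z
    cases p with
    | nil => exact absurd rfl hz
    | cons h q => exact ⟨_, h⟩
  have hdposG : ∀ u, 0 < G.degree u := fun u => lt_of_lt_of_le (hdpos u) (hdle u)
  -- real-valued degree facts
  have hrle : ∀ u, (G'.degree u : ℝ) ≤ (G.degree u : ℝ) := fun u => Nat.cast_le.2 (hdle u)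
  have hrpos : ∀ u, (0 : ℝ) < (G'.degree u : ℝ) := fun u => Nat.cast_pos.2 (hdpos u)
  have hrposG : ∀ u, (0 : ℝ) < (G.degree u : ℝ) := fun u => Nat.cast_pos.2 (hdposG u)
  have hroneG : ∀ u, (1 : ℝ) ≤ (G.degree u : ℝ) := fun u => by
    exact_mod_cast hdposG u
  have hrone : ∀ u, (1 : ℝ) ≤ (G'.degree u : ℝ) := fun u => by
    exact_mod_cast hdpos u
  have hrvlt : (G'.degree v : ℝ) < (G.degree v : ℝ) := Nat.cast_lt.2 hvlt
  -- edge sets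
  have hesub : G'.edgeFinset ⊆ G.edgeFinset := SimpleGraph.edgeFinset_mono hle
  have hemem : s(v, w) ∈ G.edgeFinset := by
    rw [SimpleGraph.mem_edgeFinset, SimpleGraph.mem_edgeSet]; exact hadj
  have henmem : s(v, w) ∉ G'.edgeFinset := by
    rw [SimpleGraph.mem_edgeFinset, SimpleGraph.mem_edgeSet]; exact hnadj
  set f : Sym2 V → ℝ := Sym2.lift ⟨fun u v => (G.degree u : ℝ) * (G.degree v : ℝ),
      fun _ _ => mul_comm _ _⟩ with hf
  set f' : Sym2 V → ℝ := Sym2.lift ⟨fun u v => (G'.degree u : ℝ) * (G'.degree v : ℝ),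
      fun _ _ => mul_comm _ _⟩ with hf'
  have hf'le : ∀ e, f' e ≤ f e := by
    intro e
    induction e using Sym2.ind with
    | _ a b =>
      simp only [hf, hf', Sym2.lift_mk]
      exact mul_le_mul (hrle a) (hrle b) (hrpos b).le (hrposG a).le
  have hfone : ∀ e, (1 : ℝ) ≤ f e := by
    intro e
    induction e using Sym2.ind with
    | _ a b =>
      simp only [hf, Sym2.lift_mk]
      calc (1 : ℝ) = 1 * 1 := (one_mul 1).symm
        _ ≤ _ := mul_le_mul (hroneG a) (hroneG b) zero_le_one (hrposG a).le
  have hf'one : ∀ e, (1 : ℝ) ≤ f' e := by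
    intro e
    induction e using Sym2.ind with
    | _ a b =>
      simp only [hf', Sym2.lift_mk]
      calc (1 : ℝ) = 1 * 1 := (one_mul 1).symm
        _ ≤ _ := mul_le_mul (hrone a) (hrone b) zero_le_one (hrpos a).le
  refine ⟨?_, ?_, ?_, ?_⟩
  · -- M1
    unfold M1
    apply Finset.sum_lt_sum
    · intro u _
      convert pow_le_pow_left₀ (by positivity) (hrle u) 2
    · exact ⟨v, Finset.mem_univ v, by
        convert pow_lt_pow_left₀ hrvlt (by positivity) (by norm_num : (2:ℕ) ≠ 0)⟩
  · -- M2
    unfold M2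
    refine lt_of_eq_of_lt (b := ∑ e ∈ G'.edgeFinset, f' e) ?_ ?_
    · rw [hf']; congr!
    calc ∑ e ∈ G'.edgeFinset, f' e ≤ ∑ e ∈ G'.edgeFinset, f e :=
          Finset.sum_le_sum (fun e _ => hf'le e)
      _ < ∑ e ∈ G.edgeFinset, f e := by
          apply Finset.sum_lt_sum_of_subset hesub hemem henmem
          · exact lt_of_lt_of_le zero_lt_one (hfone _)
          · intro j _ _
            exact le_trans zero_le_one (hfone j)
  · -- P1
    intro c hc
    unfold P1
    apply Finset.prod_lt_prod
    · intro u _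
      convert Real.rpow_pos_of_pos (hrpos u) c <;> rfl
    · intro u _
      convert Real.rpow_le_rpow (hrpos u).le (hrle u) hc.le <;> rfl
    · exact ⟨v, Finset.mem_univ v, by convert Real.rpow_lt_rpow (hrpos v).le hrvlt hc <;> rfl⟩
  · -- P2
    unfold P2
    obtain ⟨w', hw'⟩ := (SimpleGraph.degree_pos_iff_exists_adj G' v).1 (hdpos v)
    have he1 : s(v, w') ∈ G'.edgeFinset := by
      rw [SimpleGraph.mem_edgeFinset, SimpleGraph.mem_edgeSet]; exact hw'
    refine lt_of_eq_of_lt (b := ∏ e ∈ G'.edgeFinset, f' e) ?_ ?_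
    · rw [hf']; congr!
    calc ∏ e ∈ G'.edgeFinset, f' e < ∏ e ∈ G'.edgeFinset, f e := by
          apply Finset.prod_lt_prod
          · intro e _
            exact lt_of_lt_of_le zero_lt_one (hf'one e)
          · intro e _
            exact hf'le e
          · refine ⟨s(v, w'), he1, ?_⟩
            simp only [hf, hf', Sym2.lift_mk]
            exact mul_lt_mul hrvlt (hrle w') (hrpos w') (hrposG v).le
      _ ≤ ∏ e ∈ G.edgeFinset, f e := by
          rw [← Finset.prod_sdiff hesub]
          apply le_mul_of_one_le_left
          · exact Finset.prod_nonneg (fun e _ => le_trans zero_le_one (hfone e))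
          · calc (1 : ℝ) = ∏ _e ∈ G.edgeFinset \ G'.edgeFinset, (1 : ℝ) := by simp
              _ ≤ _ := Finset.prod_le_prod (fun _ _ => zero_le_one) (fun e _ => hfone e)
end

section
/- Let G be a simple undirected graph on n vertices. Then the total irregularity of G satisfies irr_t(G) ≤ (1/12)(2n^3 − 3n^2 − 2n + 3) if n is odd, and irr_t(G) ≤ (1/12)(2n^3 − 3n^2 − 2n) if n is even. -/
/-!
For degrees `0 ≤ a, b ≤ n - 1` one has `(n - 1) |a - b| ≤ a (n - 1 - b) + b (n - 1 - a)`.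
Summing over all ordered pairs of vertices and using `∑ d = 2m` gives
`(n - 1) irr_t(G) ≤ m (n (n - 1) - 2m)`, a quadratic in the number `m` of edges whose
maximum `n² (n - 1)² / 8` is below the claimed bounds once `n ≥ 4`; for `n = 2, 3` the
integrality of `m` closes the gap.
-/

open scoped Classical

/-- The total irregularity of a graph: half the sum, over all unordered pairs of
distinct vertices, of the absolute difference of their degrees. -/
noncomputable def irrt {V : Type*} [Fintype V] (G : SimpleGraph V) : ℝ :=
  (1 / 2) * ∑ e ∈ Finset.univ.filter (fun e : Sym2 V => ¬ e.IsDiag),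
    Sym2.lift ⟨fun u v => |(G.degree u : ℝ) - (G.degree v : ℝ)|,
      fun _ _ => abs_sub_comm _ _⟩ e

open Finset

theorem Finset.sum_offDiag_sym2_mk {α M : Type*} [DecidableEq α] [AddCommMonoid M]
    (s : Finset α) (f : Sym2 α → M) :
    ∑ i ∈ s.offDiag, f s(i.1, i.2) = 2 • ∑ e ∈ s.sym2 with ¬ e.IsDiag, f e := by
  rw [← sum_fiberwise_of_maps_to (g := fun i => s(i.1, i.2))
    (t := {e ∈ s.sym2 | ¬ e.IsDiag}) (fun i hi => by aesop), smul_sum]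
  refine sum_congr rfl fun e he => ?_
  induction e using Sym2.ind with
  | h a b =>
    have hab : a ≠ b := by simpa using (mem_filter.1 he).2
    have hfiber : {i ∈ s.offDiag | s(i.1, i.2) = s(a, b)} = {(a, b), (b, a)} := by
      ext ⟨x, y⟩; aesop
    rw [hfiber, sum_pair (by simp [hab]), Sym2.eq_swap, two_nsmul]

theorem Finset.sum_sum_sym2_mk {α M : Type*} [DecidableEq α] [AddCommMonoid M]
    (s : Finset α) (f : Sym2 α → M) :
    ∑ a ∈ s, ∑ b ∈ s, f s(a, b)
      = ∑ a ∈ s, f s(a, a) + 2 • ∑ e ∈ s.sym2 with ¬ e.IsDiag, f e := by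
  rw [← sum_product' (f := fun a b => f s(a, b)), ← diag_union_offDiag,
    sum_union (disjoint_diag_offDiag s), sum_diag, sum_offDiag_sym2_mk]

theorem abs_sub_mul_le {R : Type*} [CommRing R] [LinearOrder R] [IsStrictOrderedRing R]
    {a b M : R} (ha : 0 ≤ a) (hb : 0 ≤ b) (haM : a ≤ M) (hbM : b ≤ M) :
    |a - b| * M ≤ a * (M - b) + b * (M - a) := by
  rcases abs_cases (a - b) with ⟨h, _⟩ | ⟨h, _⟩ <;> rw [h] <;> nlinarith

theorem sum_sum_abs_sub_mul_le {ι R : Type*} [CommRing R] [LinearOrder R] [IsStrictOrderedRing R]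
    (s : Finset ι) (d : ι → R) {M : R} (hd : ∀ i ∈ s, 0 ≤ d i ∧ d i ≤ M) :
    (∑ i ∈ s, ∑ j ∈ s, |d i - d j|) * M
      ≤ 2 * (∑ i ∈ s, d i) * (#s * M - ∑ i ∈ s, d i) := by
  calc (∑ i ∈ s, ∑ j ∈ s, |d i - d j|) * M
      ≤ ∑ i ∈ s, ∑ j ∈ s, (d i * (M - d j) + d j * (M - d i)) := by
        simp only [sum_mul]
        gcongr with i hi j hj
        exact abs_sub_mul_le (hd i hi).1 (hd j hj).1 (hd i hi).2 (hd j hj).2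
    _ = 2 * (∑ i ∈ s, d i) * (#s * M - ∑ i ∈ s, d i) := by
        simp only [mul_sub, sum_add_distrib, sum_sub_distrib, ← mul_sum, ← sum_mul, sum_const,
          nsmul_eq_mul]
        ring

namespace SimpleGraph

variable {V : Type*} [Fintype V] (G : SimpleGraph V)

theorem four_mul_irrt : 4 * irrt G = ∑ u, ∑ v, |(G.degree u : ℝ) - G.degree v| := by
  have := sum_sum_sym2_mk (univ : Finset V)
    (Sym2.lift ⟨fun u v => |(G.degree u : ℝ) - G.degree v|, fun _ _ => abs_sub_comm _ _⟩)
  simp only [Sym2.lift_mk, sub_self, abs_zero, sum_const_zero, zero_add, sym2_univ] at this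
  rw [this, irrt, nsmul_eq_mul, ← mul_assoc]
  norm_num

theorem irrt_eq_zero_of_subsingleton [Subsingleton V] : irrt G = 0 := by
  have h : ∀ u v : V, |(G.degree u : ℝ) - G.degree v| = 0 := by
    intro u v; rw [Subsingleton.elim u v, sub_self, abs_zero]
  have := G.four_mul_irrt
  simp only [h, sum_const_zero] at this
  linarith

theorem card_sub_one_mul_irrt_le :
    ((Fintype.card V : ℝ) - 1) * irrt G
      ≤ #G.edgeFinset * (Fintype.card V * (Fintype.card V - 1) - 2 * #G.edgeFinset) := by
  have hdeg : ∀ v ∈ (univ : Finset V),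
      0 ≤ (G.degree v : ℝ) ∧ (G.degree v : ℝ) ≤ Fintype.card V - 1 :=
    fun v _ => ⟨by positivity, le_sub_iff_add_le.2 (by exact_mod_cast G.degree_lt_card_verts v)⟩
  have hsum : ∑ v, (G.degree v : ℝ) = 2 * #G.edgeFinset := by
    exact_mod_cast G.sum_degrees_eq_twice_card_edges
  have := sum_sum_abs_sub_mul_le univ (fun v => (G.degree v : ℝ)) hdeg
  rw [← four_mul_irrt, hsum, card_univ] at this
  linarith

end SimpleGraph

theorem mul_sub_two_mul_le_of_odd {n m : ℤ} (hn : 2 ≤ n) (hodd : Odd n) :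
    12 * (m * (n * (n - 1) - 2 * m)) ≤ (n - 1) * (2 * n ^ 3 - 3 * n ^ 2 - 2 * n + 3) := by
  obtain rfl | hn5 : n = 3 ∨ 5 ≤ n := by obtain ⟨k, rfl⟩ := hodd; omega
  · rcases le_or_gt m 1 with hm | hm <;> nlinarith
  -- `12 m (N - 2m) = 3 (N² - (N - 4m)²) / 2` with `N = n (n - 1)`
  · nlinarith [sq_nonneg (n * (n - 1) - 4 * m),
      mul_nonneg (sq_nonneg (n - 1)) (by nlinarith : (0 : ℤ) ≤ n * (n - 2) - 6)]

theorem mul_sub_two_mul_le_of_even {n m : ℤ} (hn : 2 ≤ n) (heven : Even n) :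
    12 * (m * (n * (n - 1) - 2 * m)) ≤ (n - 1) * (2 * n ^ 3 - 3 * n ^ 2 - 2 * n) := by
  obtain rfl | hn4 : n = 2 ∨ 4 ≤ n := by obtain ⟨k, rfl⟩ := heven; omega
  · rcases le_or_gt m 0 with hm | hm <;> nlinarith
  · nlinarith [sq_nonneg (n * (n - 1) - 4 * m),
      mul_nonneg (by nlinarith : (0 : ℤ) ≤ n * (n - 1))
        (by nlinarith : (0 : ℤ) ≤ (n - 4) * (n + 1))]

theorem stmt4 {V : Type*} [Fintype V] (G : SimpleGraph V) (n : ℕ)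
    (hn : n = Fintype.card V) :
    (Odd n → irrt G ≤ (1 / 12 : ℝ) * (2 * (n : ℝ) ^ 3 - 3 * (n : ℝ) ^ 2 - 2 * n + 3)) ∧
    (Even n → irrt G ≤ (1 / 12 : ℝ) * (2 * (n : ℝ) ^ 3 - 3 * (n : ℝ) ^ 2 - 2 * n)) := by
  by_cases hn1 : n ≤ 1
  · have : Subsingleton V := Fintype.card_le_one_iff_subsingleton.1 (hn ▸ hn1)
    rw [G.irrt_eq_zero_of_subsingleton]
    interval_cases n <;> norm_num
  have hn2 : (2 : ℤ) ≤ n := by omega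
  have hkey := G.card_sub_one_mul_irrt_le
  rw [← hn] at hkey
  suffices h : ∀ P : ℝ,
      12 * (#G.edgeFinset * (n * (n - 1) - 2 * #G.edgeFinset)) ≤ (n - 1) * P →
        irrt G ≤ 1 / 12 * P by
    refine ⟨fun hodd => h _ ?_, fun heven => h _ ?_⟩
    · exact_mod_cast mul_sub_two_mul_le_of_odd (m := #G.edgeFinset) hn2 (by exact_mod_cast hodd)
    · exact_mod_cast mul_sub_two_mul_le_of_even (m := #G.edgeFinset) hn2 (by exact_mod_cast heven)
  intro P hP
  have hpos : (0 : ℝ) < n - 1 := by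
    rw [sub_pos]; exact_mod_cast (by omega : 1 < n)
  have h12 : (n - 1) * (12 * irrt G) ≤ (n - 1) * P := by linarith
  linarith [le_of_mul_le_mul_left h12 hpos]
end

section
/- Let a ≤ 0 and b ≥ 0 be real numbers, at least one of which is nonzero. Let G be a connected simple graph on at least two vertices, let u1, u2 be two distinct non-adjacent vertices of G, and let G + u1u2 be the graph obtained from G by adding the edge u1u2. Then Gut_{a,b}(G + u1u2) < Gut_{a,b}(G). -/
/-!
Adding an edge `u₁u₂` can only raise degrees and shorten distances, so with `a ≤ 0 ≤ b` every
term `(d(u) d(v))^a · D(u,v)^b` of the index weakly decreases; connectedness keeps all degrees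
positive, which is what makes `t ↦ t^a` antitone. The pair `{u₁, u₂}` itself strictly decreases:
`d(u₁)` goes up (which matters when `a < 0`) and `D(u₁, u₂)` drops from at least `2` to `1`
(which matters when `b > 0`).
-/

open scoped Classical

/-- The general Gutman index `Gut_{a,b}(G)`: the sum, over all unordered pairs of
distinct vertices `{u, v}`, of `(d(u)·d(v))^a · (dist(u,v))^b` (real powers). -/
noncomputable def gut {V : Type*} [Fintype V] (G : SimpleGraph V) (a b : ℝ) : ℝ :=
  ∑ e ∈ Finset.univ.filter (fun e : Sym2 V => ¬ e.IsDiag),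
    Sym2.lift ⟨fun u v =>
      ((G.degree u : ℝ) * (G.degree v : ℝ)) ^ a * ((G.dist u v : ℝ)) ^ b,
      fun u v => by
        show ((G.degree u : ℝ) * (G.degree v : ℝ)) ^ a * ((G.dist u v : ℝ)) ^ b
            = ((G.degree v : ℝ) * (G.degree u : ℝ)) ^ a * ((G.dist v u : ℝ)) ^ b
        rw [mul_comm ((G.degree u : ℝ)), SimpleGraph.dist_comm]⟩ e

lemma rpow_mul_rpow_le_of_nonpos_of_nonneg {p p' q q' a b : ℝ} (hp : 0 < p) (hpp' : p ≤ p')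
    (hq' : 0 ≤ q') (hq'q : q' ≤ q) (ha : a ≤ 0) (hb : 0 ≤ b) :
    p' ^ a * q' ^ b ≤ p ^ a * q ^ b :=
  mul_le_mul (Real.rpow_le_rpow_of_nonpos hp hpp' ha) (Real.rpow_le_rpow hq' hq'q hb)
    (Real.rpow_nonneg hq' b) (Real.rpow_nonneg hp.le a)

lemma rpow_mul_rpow_lt_of_nonpos_of_nonneg {p p' q q' a b : ℝ} (hp : 0 < p) (hpp' : p ≤ p')
    (hq' : 0 < q') (hq'q : q' ≤ q) (ha : a ≤ 0) (hb : 0 ≤ b)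
    (hlt : p < p' ∧ a < 0 ∨ q' < q ∧ 0 < b) :
    p' ^ a * q' ^ b < p ^ a * q ^ b := by
  rcases hlt with ⟨hpp', ha⟩ | ⟨hq'q, hb⟩
  · exact mul_lt_mul (Real.rpow_lt_rpow_of_neg hp hpp' ha) (Real.rpow_le_rpow hq'.le hq'q hb)
      (Real.rpow_pos_of_pos hq' b) (Real.rpow_nonneg hp.le a)
  · exact mul_lt_mul' (Real.rpow_le_rpow_of_nonpos hp hpp' ha) (Real.rpow_lt_rpow hq'.le hq'q hb)
      (Real.rpow_nonneg hq'.le b) (Real.rpow_pos_of_pos hp a)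

namespace SimpleGraph

variable {V : Type*} {G H : SimpleGraph V} {u v : V}

lemma degree_lt_of_le_of_adj_of_not_adj [Fintype (G.neighborSet v)] [Fintype (H.neighborSet v)]
    (hle : G ≤ H) (hH : H.Adj v u) (hG : ¬G.Adj v u) : G.degree v < H.degree v := by
  simp_rw [← card_neighborSet_eq_degree]
  exact Set.card_lt_card ⟨fun w hw => hle hw, fun h => hG (h hH)⟩

lemma adj_sup_fromEdgeSet_self (hne : u ≠ v) : (G ⊔ fromEdgeSet {s(u, v)}).Adj u v := by
  simp [hne]

end SimpleGraph

open SimpleGraph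

section Gutman

variable {V : Type*} [Fintype V] {G H : SimpleGraph V} {a b : ℝ}

noncomputable def gutTerm (G : SimpleGraph V) (a b : ℝ) (u v : V) : ℝ :=
  ((G.degree u : ℝ) * (G.degree v : ℝ)) ^ a * ((G.dist u v : ℝ)) ^ b

lemma gut_lt_gut (hle : ∀ u v, u ≠ v → gutTerm H a b u v ≤ gutTerm G a b u v)
    (hlt : ∃ u v, u ≠ v ∧ gutTerm H a b u v < gutTerm G a b u v) : gut H a b < gut G a b := by
  refine Finset.sum_lt_sum (fun e he => ?_) ?_
  · induction e using Sym2.ind with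
    | _ u v => exact hle u v (by simpa using he)
  · obtain ⟨u, v, huv, h⟩ := hlt
    exact ⟨s(u, v), by simpa using huv, h⟩

lemma cast_degree_mul_degree_pos [Nontrivial V] (hG : G.Connected) (u v : V) :
    (0 : ℝ) < G.degree u * G.degree v :=
  mul_pos (Nat.cast_pos.2 (hG.preconnected.degree_pos_of_nontrivial u))
    (Nat.cast_pos.2 (hG.preconnected.degree_pos_of_nontrivial v))

lemma cast_degree_mul_degree_le_of_le (hGH : G ≤ H) (u v : V) :
    (G.degree u : ℝ) * G.degree v ≤ H.degree u * H.degree v := by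
  exact_mod_cast Nat.mul_le_mul (degree_le_of_le hGH) (degree_le_of_le hGH)

lemma gutTerm_le_of_le [Nontrivial V] (hG : G.Connected) (hGH : G ≤ H) (ha : a ≤ 0) (hb : 0 ≤ b)
    (u v : V) : gutTerm H a b u v ≤ gutTerm G a b u v :=
  rpow_mul_rpow_le_of_nonpos_of_nonneg (cast_degree_mul_degree_pos hG u v)
    (cast_degree_mul_degree_le_of_le hGH u v) (Nat.cast_nonneg _)
    (by exact_mod_cast (hG.preconnected u v).dist_anti hGH) ha hb

lemma gutTerm_lt_of_le_of_adj_of_not_adj [Nontrivial V] {u v : V} (hG : G.Connected)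
    (hGH : G ≤ H) (hH : H.Adj u v) (hadj : ¬G.Adj u v) (ha : a ≤ 0) (hb : 0 ≤ b)
    (hab : a ≠ 0 ∨ b ≠ 0) : gutTerm H a b u v < gutTerm G a b u v := by
  have hdeg : (G.degree u : ℝ) * G.degree v < H.degree u * H.degree v := by
    have hu : G.degree u < H.degree u := degree_lt_of_le_of_adj_of_not_adj hGH hH hadj
    have hv : G.degree v ≤ H.degree v := degree_le_of_le hGH
    exact mul_lt_mul (by exact_mod_cast hu) (by exact_mod_cast hv)
      (Nat.cast_pos.2 (hG.preconnected.degree_pos_of_nontrivial v)) (Nat.cast_nonneg _)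
  have hdistH : H.dist u v = 1 := dist_eq_one_iff_adj.mpr hH
  have hdist : (H.dist u v : ℝ) < G.dist u v := by
    rw [hdistH]
    exact_mod_cast hG.one_lt_dist_of_ne_of_not_adj hH.ne hadj
  refine rpow_mul_rpow_lt_of_nonpos_of_nonneg (cast_degree_mul_degree_pos hG u v) hdeg.le
    (by simp [hdistH]) hdist.le ha hb ?_
  exact hab.imp (fun ha0 => ⟨hdeg, ha.lt_of_ne ha0⟩) (fun hb0 => ⟨hdist, hb.lt_of_ne' hb0⟩)

end Gutman

theorem stmt5_general {V : Type*} [Fintype V] (G : SimpleGraph V)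
    (hG : G.Connected)
    (a b : ℝ) (ha : a ≤ 0) (hb : 0 ≤ b) (hab : a ≠ 0 ∨ b ≠ 0)
    (u1 u2 : V) (hne : u1 ≠ u2) (hadj : ¬ G.Adj u1 u2) :
    gut (G ⊔ SimpleGraph.fromEdgeSet {s(u1, u2)}) a b < gut G a b := by
  have : Nontrivial V := nontrivial_of_ne u1 u2 hne
  have hGH : G ≤ G ⊔ SimpleGraph.fromEdgeSet {s(u1, u2)} := le_sup_left
  exact gut_lt_gut (fun u v _ => gutTerm_le_of_le hG hGH ha hb u v)
    ⟨u1, u2, hne, gutTerm_lt_of_le_of_adj_of_not_adj hG hGH (adj_sup_fromEdgeSet_self hne)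
      hadj ha hb hab⟩

theorem stmt5 {V : Type*} [Fintype V] (G : SimpleGraph V)
    (hcard : 2 ≤ Fintype.card V) (hG : G.Connected)
    (a b : ℝ) (ha : a ≤ 0) (hb : 0 ≤ b) (hab : a ≠ 0 ∨ b ≠ 0)
    (u1 u2 : V) (hne : u1 ≠ u2) (hadj : ¬ G.Adj u1 u2) :
    gut (G ⊔ SimpleGraph.fromEdgeSet {s(u1, u2)}) a b < gut G a b :=
  stmt5_general G hG a b ha hb hab u1 u2 hne hadj
end

section
/- Let a ≤ 0 and b ≥ 0 be real numbers, at least one of which is nonzero. Then for every connected simple graph G on n ≥ 2 vertices, Gut_{a,b}(G) ≥ n(n−1)^{2a+1}/2, and equality holds if and only if G is isomorphic to the complete graph K_n. -/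
/-!
Each pair of distinct vertices contributes at least `((n - 1) ^ 2) ^ a`, since degrees are at
most `n - 1` with `a ≤ 0` and distances are at least `1` with `b ≥ 0`; summing over the
`n.choose 2` pairs gives the bound. A non-adjacent pair contributes strictly more: for `a < 0`
because neither endpoint has degree `n - 1`, for `b > 0` because their distance is at least `2`.
Hence equality forces every pair to be adjacent.
-/

open scoped Classical

open Finset

section RealAux

variable {x y m a : ℝ}

lemma sq_rpow_le_mul_rpow_of_nonpos (hx : 0 < x) (hy : 0 < y) (hxm : x ≤ m) (hym : y ≤ m)
    (ha : a ≤ 0) : (m ^ 2) ^ a ≤ (x * y) ^ a :=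
  Real.rpow_le_rpow_of_nonpos (mul_pos hx hy)
    (sq m ▸ mul_le_mul hxm hym hy.le (hx.le.trans hxm)) ha

lemma sq_rpow_lt_mul_rpow_of_neg (hx : 0 < x) (hy : 0 < y) (hxm : x < m) (hym : y ≤ m)
    (ha : a < 0) : (m ^ 2) ^ a < (x * y) ^ a :=
  Real.rpow_lt_rpow_of_neg (mul_pos hx hy)
    (sq m ▸ mul_lt_mul hxm hym hy (hx.le.trans hxm.le)) ha

end RealAux

section Sym2Sum

variable {V : Type*} [Fintype V]

lemma sum_filter_not_isDiag_const (c : ℝ) :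
    ∑ _e ∈ univ.filter (fun e : Sym2 V => ¬ e.IsDiag), c = (Fintype.card V).choose 2 * c := by
  rw [sum_const, nsmul_eq_mul, ← Fintype.card_subtype, Sym2.card_subtype_not_diag]

lemma forall_mem_filter_not_isDiag_iff {P : Sym2 V → Prop} :
    (∀ e ∈ univ.filter (fun e : Sym2 V => ¬ e.IsDiag), P e) ↔
      ∀ u v : V, u ≠ v → P s(u, v) := by
  simp only [mem_filter, mem_univ, true_and]
  exact ⟨fun h u v huv => h _ (Sym2.mk_isDiag_iff.not.mpr huv),
    fun h e => e.ind fun u v huv => h u v (Sym2.mk_isDiag_iff.not.mp huv)⟩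

end Sym2Sum

namespace SimpleGraph

variable {V : Type*} [Fintype V] (G : SimpleGraph V) {u v : V} {a b : ℝ}

noncomputable def gutWeight (a b : ℝ) (u v : V) : ℝ :=
  ((G.degree u : ℝ) * G.degree v) ^ a * (G.dist u v : ℝ) ^ b

lemma gutWeight_comm (a b : ℝ) (u v : V) : G.gutWeight a b u v = G.gutWeight a b v u := by
  rw [gutWeight, gutWeight, mul_comm (G.degree u : ℝ), dist_comm]

lemma gut_eq_sum_gutWeight (a b : ℝ) :
    gut G a b = ∑ e ∈ univ.filter (fun e : Sym2 V => ¬ e.IsDiag),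
      Sym2.lift ⟨G.gutWeight a b, G.gutWeight_comm a b⟩ e :=
  rfl

lemma degree_le_card_sub_one (u : V) : (G.degree u : ℝ) ≤ Fintype.card V - 1 := by
  have := G.degree_lt_card_verts u
  rw [le_sub_iff_add_le]
  exact_mod_cast this

lemma sq_rpow_le_gutWeight (hG : G.Reachable u v) (huv : u ≠ v) (ha : a ≤ 0) (hb : 0 ≤ b) :
    (((Fintype.card V : ℝ) - 1) ^ 2) ^ a ≤ G.gutWeight a b u v := by
  have hu : (0 : ℝ) < G.degree u := Nat.cast_pos.mpr (hG.degree_pos_left huv)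
  have hv : (0 : ℝ) < G.degree v := Nat.cast_pos.mpr (hG.degree_pos_right huv)
  have hdeg := sq_rpow_le_mul_rpow_of_nonpos hu hv (G.degree_le_card_sub_one u)
    (G.degree_le_card_sub_one v) ha
  have hdist : (1 : ℝ) ≤ (G.dist u v : ℝ) ^ b :=
    Real.one_le_rpow (by exact_mod_cast hG.pos_dist_of_ne huv) hb
  exact hdeg.trans (le_mul_of_one_le_right (by positivity) hdist)

lemma sq_rpow_lt_gutWeight (hG : G.Reachable u v) (huv : u ≠ v) (hadj : ¬ G.Adj u v)
    (ha : a ≤ 0) (hb : 0 ≤ b) (hab : a ≠ 0 ∨ b ≠ 0) :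
    (((Fintype.card V : ℝ) - 1) ^ 2) ^ a < G.gutWeight a b u v := by
  have hu : (0 : ℝ) < G.degree u := Nat.cast_pos.mpr (hG.degree_pos_left huv)
  have hv : (0 : ℝ) < G.degree v := Nat.cast_pos.mpr (hG.degree_pos_right huv)
  have hdist : 1 ≤ (G.dist u v : ℝ) := by exact_mod_cast hG.pos_dist_of_ne huv
  rcases hab with ha' | hb'
  · have hdeg : (G.degree u : ℝ) < Fintype.card V - 1 := by
      have : G.degree u < Fintype.card V - 1 := (G.degree_lt_card_sub_one u).mpr
        fun h => hadj (h huv)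
      rw [lt_sub_iff_add_lt]
      exact_mod_cast Nat.add_lt_of_lt_sub this
    exact (sq_rpow_lt_mul_rpow_of_neg hu hv hdeg (G.degree_le_card_sub_one v)
      (ha.lt_of_ne ha')).trans_le (le_mul_of_one_le_right (by positivity)
        (Real.one_le_rpow hdist hb))
  · have hdist2 : 1 < (G.dist u v : ℝ) := by
      have : G.dist u v ≠ 1 := fun h => hadj (dist_eq_one_iff_adj.mp h)
      have : 1 ≤ G.dist u v := hG.pos_dist_of_ne huv
      exact_mod_cast (show 1 < G.dist u v by omega)
    exact (sq_rpow_le_mul_rpow_of_nonpos hu hv (G.degree_le_card_sub_one u)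
      (G.degree_le_card_sub_one v) ha).trans_lt (lt_mul_of_one_lt_right (by positivity)
        (Real.one_lt_rpow hdist2 (hb.lt_of_ne' hb')))

lemma gutWeight_eq_of_forall_isUniversal (h : ∀ w, G.IsUniversal w) (huv : u ≠ v) (a b : ℝ) :
    G.gutWeight a b u v = (((Fintype.card V : ℝ) - 1) ^ 2) ^ a := by
  have hdeg (w : V) : (G.degree w : ℝ) = Fintype.card V - 1 := by
    rw [(G.degree_eq_card_sub_one w).mpr (h w), Nat.cast_pred (Fintype.card_pos_iff.mpr ⟨w⟩)]
  rw [gutWeight, hdeg, hdeg, dist_eq_one_iff_adj.mpr (h u huv), Nat.cast_one, Real.one_rpow,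
    mul_one, sq]

theorem choose_two_mul_le_gut (hG : G.Connected) (ha : a ≤ 0) (hb : 0 ≤ b) :
    (Fintype.card V).choose 2 * (((Fintype.card V : ℝ) - 1) ^ 2) ^ a ≤ gut G a b := by
  rw [← sum_filter_not_isDiag_const, gut_eq_sum_gutWeight]
  refine sum_le_sum (forall_mem_filter_not_isDiag_iff.mpr fun u v huv => ?_)
  exact G.sq_rpow_le_gutWeight (hG u v) huv ha hb

theorem gut_eq_choose_two_mul_iff (hG : G.Connected) (ha : a ≤ 0) (hb : 0 ≤ b)
    (hab : a ≠ 0 ∨ b ≠ 0) :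
    gut G a b = (Fintype.card V).choose 2 * (((Fintype.card V : ℝ) - 1) ^ 2) ^ a ↔ G = ⊤ := by
  rw [← sum_filter_not_isDiag_const, gut_eq_sum_gutWeight, eq_comm,
    sum_eq_sum_iff_of_le (forall_mem_filter_not_isDiag_iff.mpr fun u v huv =>
      G.sq_rpow_le_gutWeight (hG u v) huv ha hb), forall_mem_filter_not_isDiag_iff]
  simp only [Sym2.lift_mk]
  constructor
  · intro h
    ext u v
    refine ⟨G.ne_of_adj, fun huv => ?_⟩
    by_contra hadj
    exact (G.sq_rpow_lt_gutWeight (hG u v) huv hadj ha hb hab).ne (h u v huv)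
  · rintro rfl u v huv
    exact (gutWeight_eq_of_forall_isUniversal _ (fun _ _ h => h) huv a b).symm

theorem nonempty_iso_top_iff {W : Type*} [Fintype W] (h : Fintype.card V = Fintype.card W) :
    Nonempty (G ≃g (⊤ : SimpleGraph W)) ↔ G = ⊤ := by
  refine ⟨fun ⟨φ⟩ => ?_,
    fun hG => hG ▸ ⟨Iso.completeGraph (Fintype.equivOfCardEq h)⟩⟩
  ext u v
  rw [← φ.map_adj_iff, top_adj, top_adj, φ.injective.ne_iff]

end SimpleGraph

lemma mul_sub_one_rpow_div_two_eq_choose_two_mul {n : ℕ} (hn : 2 ≤ n) (a : ℝ) :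
    (n : ℝ) * ((n : ℝ) - 1) ^ (2 * a + 1) / 2 = n.choose 2 * (((n : ℝ) - 1) ^ 2) ^ a := by
  have hpos : (0 : ℝ) < n - 1 := by
    rw [sub_pos]
    exact_mod_cast hn
  rw [Real.rpow_add_one hpos.ne', ← Real.rpow_natCast_mul hpos.le, Nat.cast_choose_two]
  push_cast
  ring

theorem stmt6 {V : Type*} [Fintype V] (G : SimpleGraph V) (n : ℕ)
    (hn : n = Fintype.card V) (hn2 : 2 ≤ n) (hG : G.Connected)
    (a b : ℝ) (ha : a ≤ 0) (hb : 0 ≤ b) (hab : a ≠ 0 ∨ b ≠ 0) :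
    (n : ℝ) * ((n : ℝ) - 1) ^ (2 * a + 1) / 2 ≤ gut G a b ∧
    (gut G a b = (n : ℝ) * ((n : ℝ) - 1) ^ (2 * a + 1) / 2 ↔
      Nonempty (G ≃g (⊤ : SimpleGraph (Fin n)))) := by
  rw [mul_sub_one_rpow_div_two_eq_choose_two_mul hn2,
    G.nonempty_iso_top_iff (by rw [hn, Fintype.card_fin])]
  subst hn
  exact ⟨G.choose_two_mul_le_gut hG ha hb, G.gut_eq_choose_two_mul_iff hG ha hb hab⟩
end

section
/- Let T be a tree on n vertices with exactly p pendent vertices, where 2 ≤ p ≤ n−1, and let f be a strictly convex real-valued function. Set r = ⌊(n−2)/(n−p)⌋ + 1. Then H_f(T) ≥ [n − (r−1)(n−p) − 2]·f(r+1) + [(r−1)(n−p) − p + 2]·f(r) + p·f(1), and equality occurs only if the degree sequence of T consists of the value r+1 with multiplicity n − (r−1)(n−p) − 2, the value r with multiplicity (r−1)(n−p) − p + 2, and the value 1 with multiplicity p. -/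
open scoped Classical

/-- The vertex-degree function index `H_f(G) = Σ_{u ∈ V(G)} f(d(u))`. -/
noncomputable def Hf {V : Type*} [Fintype V] (G : SimpleGraph V) (f : ℝ → ℝ) : ℝ :=
  ∑ v, f (G.degree v)

/-- The degree sequence of a graph, as a multiset of vertex degrees. -/
noncomputable def degSeq {V : Type*} [Fintype V] (G : SimpleGraph V) : Multiset ℕ :=
  Finset.univ.val.map (fun v => G.degree v)


private lemma chord_lt (f : ℝ → ℝ) (hf : StrictConvexOn ℝ Set.univ f) (r d : ℕ)
    (hd : d < r ∨ r + 1 < d) :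
    ((d:ℝ) - r) * f ((r:ℝ)+1) + ((r:ℝ) + 1 - d) * f r < f d := by
  rcases hd with h | h
  · have hd' : (d:ℝ) < r := by exact_mod_cast h
    have hpos : (0:ℝ) < (r:ℝ) + 1 - d := by linarith
    have ha : (0:ℝ) < 1 / ((r:ℝ)+1-d) := by positivity
    have hb : (0:ℝ) < ((r:ℝ)-d) / ((r:ℝ)+1-d) := by
      apply div_pos <;> linarith
    have hab : 1/((r:ℝ)+1-d) + ((r:ℝ)-d)/((r:ℝ)+1-d) = 1 := by
      rw [← add_div, show (1:ℝ) + ((r:ℝ)-d) = (r:ℝ)+1-d by ring]; exact div_self (ne_of_gt hpos)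
    have hne : (d:ℝ) ≠ (r:ℝ)+1 := by linarith
    have key := hf.2 (Set.mem_univ (d:ℝ)) (Set.mem_univ ((r:ℝ)+1)) hne ha hb hab
    have hx : (1/((r:ℝ)+1-d)) • (d:ℝ) + (((r:ℝ)-d)/((r:ℝ)+1-d)) • ((r:ℝ)+1) = r := by
      simp only [smul_eq_mul]
      field_simp
      try ring
    rw [hx] at key
    simp only [smul_eq_mul] at key
    have h2 := mul_lt_mul_of_pos_left key hpos
    have e1 : ((r:ℝ)+1-d) * (1/((r:ℝ)+1-d) * f d + (((r:ℝ)-d)/((r:ℝ)+1-d)) * f ((r:ℝ)+1)) = f d + ((r:ℝ)-d) * f ((r:ℝ)+1) := by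
      field_simp
      try ring
    rw [e1] at h2
    nlinarith [h2]
  · have hd' : (r:ℝ) + 1 < d := by exact_mod_cast h
    have hpos : (0:ℝ) < (d:ℝ) - r := by linarith
    have ha : (0:ℝ) < ((d:ℝ)-r-1) / ((d:ℝ)-r) := by
      apply div_pos <;> linarith
    have hb : (0:ℝ) < 1 / ((d:ℝ)-r) := by positivity
    have hab : ((d:ℝ)-r-1)/((d:ℝ)-r) + 1/((d:ℝ)-r) = 1 := by
      rw [← add_div, show ((d:ℝ)-r-1) + 1 = (d:ℝ)-r by ring]; exact div_self (ne_of_gt hpos)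
    have hne : (r:ℝ) ≠ (d:ℝ) := by linarith
    have key := hf.2 (Set.mem_univ (r:ℝ)) (Set.mem_univ (d:ℝ)) hne ha hb hab
    have hx : (((d:ℝ)-r-1)/((d:ℝ)-r)) • (r:ℝ) + (1/((d:ℝ)-r)) • (d:ℝ) = (r:ℝ)+1 := by
      simp only [smul_eq_mul]
      field_simp
      try ring
    rw [hx] at key
    simp only [smul_eq_mul] at key
    have h2 := mul_lt_mul_of_pos_left key hpos
    have e1 : ((d:ℝ)-r) * ((((d:ℝ)-r-1)/((d:ℝ)-r)) * f r + (1/((d:ℝ)-r)) * f d) = ((d:ℝ)-r-1) * f r + f d := by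
      field_simp
      try ring
    rw [e1] at h2
    nlinarith [h2]

private lemma chord_le (f : ℝ → ℝ) (hf : StrictConvexOn ℝ Set.univ f) (r d : ℕ)
    (hd : d ≤ r ∨ r + 1 ≤ d) :
    ((d:ℝ) - r) * f ((r:ℝ)+1) + ((r:ℝ) + 1 - d) * f r ≤ f d := by
  by_cases h1 : d = r
  · subst h1; ring_nf; rfl
  by_cases h2 : d = r + 1
  · subst h2; push_cast; ring_nf; rfl
  · exact le_of_lt (chord_lt f hf r d (by omega))


theorem stmt10 {V : Type*} [Fintype V] (T : SimpleGraph V) (hT : T.IsTree)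
    (n p : ℕ) (hn : n = Fintype.card V)
    (hp : p = (Finset.univ.filter (fun v => T.degree v = 1)).card)
    (hp2 : 2 ≤ p) (hpn : p ≤ n - 1)
    (f : ℝ → ℝ) (hf : StrictConvexOn ℝ Set.univ f)
    (r : ℕ) (hr : r = (n - 2) / (n - p) + 1) :
    ((n : ℝ) - ((r : ℝ) - 1) * ((n : ℝ) - (p : ℝ)) - 2) * f ((r : ℝ) + 1)
      + (((r : ℝ) - 1) * ((n : ℝ) - (p : ℝ)) - (p : ℝ) + 2) * f (r : ℝ)
      + (p : ℝ) * f 1 ≤ Hf T f ∧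
    (Hf T f = ((n : ℝ) - ((r : ℝ) - 1) * ((n : ℝ) - (p : ℝ)) - 2) * f ((r : ℝ) + 1)
        + (((r : ℝ) - 1) * ((n : ℝ) - (p : ℝ)) - (p : ℝ) + 2) * f (r : ℝ)
        + (p : ℝ) * f 1 →
      degSeq T = Multiset.replicate (n - (r - 1) * (n - p) - 2) (r + 1)
        + Multiset.replicate ((r - 1) * (n - p) + 2 - p) r
        + Multiset.replicate p 1) := by
  -- basic cardinalities
  have hn3 : 3 ≤ n := by omega
  have hcard : Fintype.card V = n := hn.symm
  have hnt : Nontrivial V := by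
    rw [← Fintype.one_lt_card_iff_nontrivial, hcard]; omega
  -- every vertex has positive degree
  have hdegpos : ∀ v : V, 0 < T.degree v := by
    intro v
    rw [SimpleGraph.degree_pos_iff_exists_adj]
    obtain ⟨w, hw⟩ := exists_ne v
    obtain ⟨walk⟩ := hT.isConnected.preconnected v w
    cases walk with
    | nil => exact absurd rfl hw
    | cons h _ => exact ⟨_, h⟩
  -- degree sum
  have hedge : T.edgeFinset.card + 1 = Fintype.card V := hT.card_edgeFinset
  have hsumdeg : ∑ v, T.degree v = 2 * (n - 1) := by
    rw [SimpleGraph.sum_degrees_eq_twice_card_edges]; omega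
  -- leaves and internal vertices
  set L : Finset V := Finset.univ.filter (fun v => T.degree v = 1) with hL
  set I : Finset V := Finset.univ.filter (fun v => ¬ T.degree v = 1) with hI
  have hLcard : L.card = p := hp.symm
  have hLI : L.card + I.card = n := by
    rw [hL, hI, Finset.card_filter_add_card_filter_not, Finset.card_univ, hcard]
  have hIcard : I.card = n - p := by omega
  have hIdeg : ∀ v ∈ I, 2 ≤ T.degree v := by
    intro v hv
    have h1 := hdegpos v
    rw [hI, Finset.mem_filter] at hv
    omega
  have hsumL : ∑ v ∈ L, T.degree v = p := by
    have h1 : ∀ v ∈ L, T.degree v = 1 := by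
      intro v hv; rw [hL, Finset.mem_filter] at hv; exact hv.2
    rw [Finset.sum_congr rfl h1, Finset.sum_const, smul_eq_mul, hLcard, mul_one]
  have hsumsplit := (Finset.sum_filter_add_sum_filter_not Finset.univ
      (fun v => T.degree v = 1) (fun v => T.degree v)).symm
  rw [← hL, ← hI] at hsumsplit
  have hsumI : ∑ v ∈ I, T.degree v = 2 * n - 2 - p := by
    rw [hsumdeg, hsumL] at hsumsplit
    omega
  -- arithmetic on r
  obtain ⟨q, hq⟩ : ∃ q, (n - 2) / (n - p) = q := ⟨_, rfl⟩
  have hq1 : 1 ≤ q := by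
    rw [← hq, Nat.one_le_div_iff (by omega)]; omega
  have hdiv := Nat.div_add_mod (n - 2) (n - p)
  have hmod := Nat.mod_lt (n - 2) (y := n - p) (by omega)
  rw [hq] at hdiv
  obtain ⟨e, he⟩ : ∃ e, (n - 2) % (n - p) = e := ⟨_, rfl⟩
  rw [he] at hdiv hmod
  obtain ⟨w, hw⟩ : ∃ w, (n - p) * q = w := ⟨_, rfl⟩
  rw [hw] at hdiv
  have hrq : r = q + 1 := by rw [hr, hq]
  have hr2 : 2 ≤ r := by omega
  have hrw : (n - p) * r = w + (n - p) := by
    rw [hrq, Nat.mul_add, hw, mul_one]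
  have hrs1 : (n - p) * r ≤ 2 * n - 2 - p := by omega
  have hrs2 : 2 * n - 2 - p < (n - p) * (r + 1) := by
    have : (n - p) * (r + 1) = (n - p) * r + (n - p) := by ring
    omega
  -- real cast facts
  have hsumIR : ∑ v ∈ I, (T.degree v : ℝ) = 2 * (n : ℝ) - 2 - p := by
    have h1 : (∑ v ∈ I, T.degree v) + p + 2 = 2 * n := by omega
    have h2 : ((∑ v ∈ I, T.degree v : ℕ) : ℝ) + p + 2 = 2 * n := by
      exact_mod_cast h1
    push_cast at h2
    linarith
  have hIcardR : (I.card : ℝ) = (n : ℝ) - p := by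
    have h1 : I.card + p = n := by omega
    have h2 : ((I.card : ℕ) : ℝ) + p = n := by exact_mod_cast h1
    linarith
  -- the linear lower bound, summed over internal vertices
  have hA : ∑ v ∈ I, ((T.degree v : ℝ) - r) =
      (n : ℝ) - ((r : ℝ) - 1) * ((n : ℝ) - (p : ℝ)) - 2 := by
    rw [Finset.sum_sub_distrib, hsumIR, Finset.sum_const, nsmul_eq_mul, hIcardR]
    ring
  have hB : ∑ v ∈ I, ((r : ℝ) + 1 - (T.degree v : ℝ)) =
      ((r : ℝ) - 1) * ((n : ℝ) - (p : ℝ)) - (p : ℝ) + 2 := by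
    rw [Finset.sum_sub_distrib, hsumIR, Finset.sum_const, nsmul_eq_mul, hIcardR]
    ring
  have hline : ∑ v ∈ I, (((T.degree v : ℝ) - r) * f ((r : ℝ) + 1)
        + ((r : ℝ) + 1 - (T.degree v : ℝ)) * f (r : ℝ))
      = ((n : ℝ) - ((r : ℝ) - 1) * ((n : ℝ) - (p : ℝ)) - 2) * f ((r : ℝ) + 1)
        + (((r : ℝ) - 1) * ((n : ℝ) - (p : ℝ)) - (p : ℝ) + 2) * f (r : ℝ) := by
    rw [Finset.sum_add_distrib, ← Finset.sum_mul, ← Finset.sum_mul, hA, hB]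
  have hub : ∀ v ∈ I, ((T.degree v : ℝ) - r) * f ((r : ℝ) + 1)
      + ((r : ℝ) + 1 - (T.degree v : ℝ)) * f (r : ℝ) ≤ f (T.degree v) :=
    fun v _ => chord_le f hf r (T.degree v) (by omega)
  have hIsum_ge : ((n : ℝ) - ((r : ℝ) - 1) * ((n : ℝ) - (p : ℝ)) - 2) * f ((r : ℝ) + 1)
      + (((r : ℝ) - 1) * ((n : ℝ) - (p : ℝ)) - (p : ℝ) + 2) * f (r : ℝ)
      ≤ ∑ v ∈ I, f (T.degree v) := by
    rw [← hline]; exact Finset.sum_le_sum hub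
  have hLsum : ∑ v ∈ L, f (T.degree v) = (p : ℝ) * f 1 := by
    have h1 : ∀ v ∈ L, f ((T.degree v : ℕ) : ℝ) = f 1 := by
      intro v hv; rw [hL, Finset.mem_filter] at hv; rw [hv.2]; norm_num
    rw [Finset.sum_congr rfl h1, Finset.sum_const, nsmul_eq_mul, hLcard]
  have hHf : Hf T f = ∑ v ∈ L, f (T.degree v) + ∑ v ∈ I, f (T.degree v) := by
    rw [Hf]
    exact (Finset.sum_filter_add_sum_filter_not Finset.univ
      (fun v => T.degree v = 1) (fun v => f (T.degree v))).symm
  constructor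
  · linarith
  -- equality case
  intro heq
  have hall : ∀ v ∈ I, T.degree v = r ∨ T.degree v = r + 1 := by
    by_contra hcon
    push_neg at hcon
    obtain ⟨v, hvI, hv1, hv2⟩ := hcon
    have hst := chord_lt f hf r (T.degree v) (by omega)
    have hlt := Finset.sum_lt_sum hub ⟨v, hvI, hst⟩
    rw [hline] at hlt
    linarith
  set a' := (I.filter (fun v => T.degree v = r + 1)).card with ha'
  set b' := (I.filter (fun v => T.degree v = r)).card with hb'
  have hbeq : I.filter (fun v => ¬ T.degree v = r + 1) = I.filter (fun v => T.degree v = r) := by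
    apply Finset.filter_congr
    intro v hv
    rcases hall v hv with h | h <;> simp [h]
  have hab : a' + b' = n - p := by
    rw [ha', hb', ← hbeq, Finset.card_filter_add_card_filter_not, hIcard]
  have hs1 : ∑ v ∈ I.filter (fun v => T.degree v = r + 1), T.degree v = a' * (r + 1) := by
    rw [Finset.sum_congr rfl (fun v hv => (Finset.mem_filter.mp hv).2), Finset.sum_const,
      smul_eq_mul]
  have hs2 : ∑ v ∈ I.filter (fun v => T.degree v = r), T.degree v = b' * r := by
    rw [Finset.sum_congr rfl (fun v hv => (Finset.mem_filter.mp hv).2), Finset.sum_const,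
      smul_eq_mul]
  have hsum2 := (Finset.sum_filter_add_sum_filter_not I
      (fun v => T.degree v = r + 1) (fun v => T.degree v)).symm
  rw [hbeq, hs1, hs2, hsumI] at hsum2
  -- 2*n-2-p = a'*(r+1) + b'*r
  have hkey : r * (n - p) + a' = 2 * n - 2 - p := by
    have e : a' * (r + 1) + b' * r = r * (a' + b') + a' := by ring
    rw [hsum2, e, hab]
  have hrw' : r * (n - p) = w + (n - p) := by rw [Nat.mul_comm]; exact hrw
  have hprod : (r - 1) * (n - p) = w := by
    have : r - 1 = q := by omega
    rw [this, Nat.mul_comm]; exact hw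
  have haval : a' = n - (r - 1) * (n - p) - 2 := by rw [hprod]; omega
  have hbval : b' = (r - 1) * (n - p) + 2 - p := by rw [hprod]; omega
  -- count argument
  have hcount : ∀ k, (degSeq T).count k
      = (Finset.univ.filter (fun v => T.degree v = k)).card := by
    intro k
    rw [degSeq, Multiset.count_map, ← Finset.filter_val, ← Finset.card_def]
    congr 1
    exact Finset.filter_congr (fun v _ => eq_comm)
  rw [← haval, ← hbval]
  refine Multiset.ext.mpr fun k => ?_
  rw [hcount k]
  simp only [Multiset.count_add, Multiset.count_replicate]
  by_cases h1 : k = r + 1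
  · subst h1
    rw [if_pos rfl, if_neg (by omega), if_neg (by omega)]
    have hfe : Finset.univ.filter (fun v => T.degree v = r + 1)
        = I.filter (fun v => T.degree v = r + 1) := by
      ext v
      simp only [hI, Finset.mem_filter, Finset.mem_univ, true_and]
      constructor
      · intro h; exact ⟨by omega, h⟩
      · rintro ⟨_, h⟩; exact h
    rw [hfe]; omega
  by_cases h2 : k = r
  · rw [h2]
    rw [if_neg (by omega), if_pos rfl, if_neg (by omega)]
    have hfe : Finset.univ.filter (fun v => T.degree v = r)
        = I.filter (fun v => T.degree v = r) := by
      ext v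
      simp only [hI, Finset.mem_filter, Finset.mem_univ, true_and]
      constructor
      · intro h; exact ⟨by omega, h⟩
      · rintro ⟨_, h⟩; exact h
    rw [hfe]; omega
  by_cases h3 : k = 1
  · subst h3
    rw [if_neg (by omega), if_neg (by omega), if_pos rfl, ← hL]
    omega
  · rw [if_neg (by omega), if_neg (by omega), if_neg (by omega)]
    have hfe : Finset.univ.filter (fun v => T.degree v = k) = ∅ := by
      rw [Finset.filter_eq_empty_iff]
      intro v _
      by_cases hv1 : T.degree v = 1
      · omega
      · have hvI : v ∈ I := by rw [hI, Finset.mem_filter]; exact ⟨Finset.mem_univ v, hv1⟩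
        rcases hall v hvI with h | h <;> omega
    rw [hfe]
    simp
end

section
/- Let T be a tree on n vertices with exactly p pendent vertices, where 2 ≤ p ≤ n−1, and let f be a strictly convex real-valued function. Then H_f(T) ≤ p·f(1) + (n−p−1)·f(2) + f(p), and equality occurs only if the degree sequence of T consists of the value p once, the value 2 with multiplicity n−p−1, and the value 1 with multiplicity p. -/
open scoped Classical

lemma interp_bound (f : ℝ → ℝ) (hf : StrictConvexOn ℝ Set.univ f) {a b x : ℝ}
    (hab : a < b) (hax : a ≤ x) (hxb : x ≤ b) :
    f x ≤ ((b - x) * f a + (x - a) * f b) / (b - a) ∧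
      (f x = ((b - x) * f a + (x - a) * f b) / (b - a) → x = a ∨ x = b) := by
  have hba : (0:ℝ) < b - a := by linarith
  have hx : ((b - x)/(b-a)) • a + ((x - a)/(b-a)) • b = x := by
    rw [smul_eq_mul, smul_eq_mul, div_mul_eq_mul_div, div_mul_eq_mul_div, ← add_div,
      div_eq_iff hba.ne']
    ring
  have hsum : (b - x)/(b-a) + (x - a)/(b-a) = 1 := by
    rw [← add_div, div_eq_one_iff_eq hba.ne']; ring
  have heqr : ((b - x)/(b-a)) * f a + ((x - a)/(b-a)) * f b
      = ((b - x) * f a + (x - a) * f b) / (b - a) := by ring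
  constructor
  · have := hf.convexOn.2 (Set.mem_univ a) (Set.mem_univ b)
      (div_nonneg (by linarith) hba.le) (div_nonneg (by linarith) hba.le) hsum
    rw [hx] at this
    simpa [smul_eq_mul, heqr] using this
  · intro heq
    by_contra hcon
    push_neg at hcon
    obtain ⟨hxa, hxbne⟩ := hcon
    have h1 : a < x := lt_of_le_of_ne hax (Ne.symm hxa)
    have h2 : x < b := lt_of_le_of_ne hxb hxbne
    have := hf.2 (Set.mem_univ a) (Set.mem_univ b) (ne_of_lt hab)
      (div_pos (by linarith) hba) (div_pos (by linarith) hba) hsum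
    rw [hx] at this
    rw [heq] at this
    simp only [smul_eq_mul] at this
    rw [heqr] at this
    exact lt_irrefl _ this

theorem stmt11 {V : Type*} [Fintype V] (T : SimpleGraph V) (hT : T.IsTree)
    (n p : ℕ) (hn : n = Fintype.card V)
    (hp : p = (Finset.univ.filter (fun v => T.degree v = 1)).card)
    (hp2 : 2 ≤ p) (hpn : p ≤ n - 1)
    (f : ℝ → ℝ) (hf : StrictConvexOn ℝ Set.univ f) :
    Hf T f ≤ (p : ℝ) * f 1 + ((n : ℝ) - (p : ℝ) - 1) * f 2 + f (p : ℝ) ∧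
    (Hf T f = (p : ℝ) * f 1 + ((n : ℝ) - (p : ℝ) - 1) * f 2 + f (p : ℝ) →
      degSeq T = {p} + Multiset.replicate (n - p - 1) 2 + Multiset.replicate p 1) := by
  classical
  set S : Finset V := Finset.univ.filter (fun v => T.degree v = 1) with hSdef
  -- basic cardinalities
  have hple : p ≤ n := by
    rw [hp, hn, ← Finset.card_univ]
    exact Finset.card_filter_le _ _
  have hpn' : p + 1 ≤ n := by omega
  have hn3 : 3 ≤ n := by omega
  have hVnt : Nontrivial V := by
    rw [← Fintype.one_lt_card_iff_nontrivial]
    omega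
  have hdeg1 : ∀ v : V, 1 ≤ T.degree v := by
    intro v
    obtain ⟨w, hw⟩ := exists_ne v
    have hr := hT.isConnected.preconnected v w
    obtain ⟨q⟩ := hr
    cases q with
    | nil => exact absurd rfl hw
    | cons h q => exact (T.degree_pos_iff_exists_adj v).2 ⟨_, h⟩
  -- degree sum
  have hedge : T.edgeFinset.card + 1 = Fintype.card V := hT.card_edgeFinset
  have hsum : (∑ v, T.degree v) + 2 = 2 * n := by
    rw [SimpleGraph.sum_degrees_eq_twice_card_edges]
    omega
  have hScard : S.card = p := hp.symm
  have hCcard : S.card + Sᶜ.card = n := by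
    rw [Finset.card_add_card_compl, hn]
  have hmemC : ∀ v, v ∈ Sᶜ ↔ T.degree v ≠ 1 := by
    intro v; simp [hSdef]
  have hC2 : ∀ v ∈ Sᶜ, 2 ≤ T.degree v := by
    intro v hv
    have := (hmemC v).1 hv
    have := hdeg1 v
    omega
  have hsplit : (∑ v ∈ S, T.degree v) + (∑ v ∈ Sᶜ, T.degree v) = ∑ v, T.degree v :=
    Finset.sum_add_sum_compl S _
  have hSsum : ∑ v ∈ S, T.degree v = p := by
    rw [Finset.sum_congr rfl (fun v hv => by
      simpa [hSdef] using (Finset.mem_filter.1 hv).2)]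
    simp [hScard]
  have hCsum : (∑ v ∈ Sᶜ, T.degree v) + p + 2 = 2 * n := by omega
  have hCsum' : ∑ v ∈ Sᶜ, T.degree v = (∑ v ∈ Sᶜ, (T.degree v - 2)) + 2 * Sᶜ.card := by
    rw [Finset.sum_congr rfl (fun v hv => (Nat.sub_add_cancel (hC2 v hv)).symm),
      Finset.sum_add_distrib, Finset.sum_const, smul_eq_mul, mul_comm]
  have he : (∑ v ∈ Sᶜ, (T.degree v - 2)) + 2 = p := by omega
  have hdlep : ∀ v ∈ Sᶜ, T.degree v ≤ p := by
    intro v hv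
    have h1 : T.degree v - 2 ≤ ∑ w ∈ Sᶜ, (T.degree w - 2) :=
      Finset.single_le_sum (f := fun w => T.degree w - 2) (fun w _ => Nat.zero_le _) hv
    have := hC2 v hv
    omega
  -- Hf decomposition
  have hHf : Hf T f = (p:ℝ) * f 1 + ∑ v ∈ Sᶜ, f (T.degree v) := by
    rw [Hf, ← Finset.sum_add_sum_compl S]
    congr 1
    rw [Finset.sum_congr rfl (fun v hv => by
      rw [show T.degree v = 1 from by simpa [hSdef] using (Finset.mem_filter.1 hv).2])]
    simp [hScard]
  -- degSeq over S
  have hmapS : Multiset.map (fun v => T.degree v) S.val = Multiset.replicate p 1 := by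
    rw [Multiset.eq_replicate]
    constructor
    · rw [Multiset.card_map]; exact hScard
    · intro b hb
      obtain ⟨v, hv, rfl⟩ := Multiset.mem_map.1 hb
      simpa [hSdef] using (Finset.mem_filter.1 hv).2
  have hUval : (Finset.univ : Finset V).val = S.val + Sᶜ.val := by
    rw [show (Finset.univ : Finset V) = S.disjUnion Sᶜ disjoint_compl_right from by
      rw [Finset.disjUnion_eq_union, Finset.union_compl]]
    rfl
  rcases hp2.eq_or_lt with heq2 | hp3
  · -- p = 2 case
    subst heq2
    have hC2eq : ∀ v ∈ Sᶜ, T.degree v = 2 := by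
      intro v hv
      have h1 : T.degree v - 2 ≤ ∑ w ∈ Sᶜ, (T.degree w - 2) :=
        Finset.single_le_sum (f := fun w => T.degree w - 2) (fun w _ => Nat.zero_le _) hv
      have := hC2 v hv
      omega
    have hCf : ∑ v ∈ Sᶜ, f (T.degree v) = (Sᶜ.card : ℝ) * f 2 := by
      rw [Finset.sum_congr rfl (fun v hv => by rw [hC2eq v hv])]
      simp [mul_comm]
    have hcardR : (Sᶜ.card : ℝ) = (n:ℝ) - 2 := by
      have : Sᶜ.card = n - 2 := by omega
      rw [this]
      push_cast [Nat.cast_sub (by omega : 2 ≤ n)]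
      ring
    have hEq : Hf T f = (2:ℝ) * f 1 + ((n:ℝ) - 2 - 1) * f 2 + f 2 := by
      rw [hHf, hCf, hcardR]
      push_cast
      ring
    constructor
    · rw [hEq]; push_cast; ring_nf; exact le_refl _
    · intro _
      -- degSeq computation
      have hmapC : Multiset.map (fun v => T.degree v) Sᶜ.val
          = Multiset.replicate (n - 2) 2 := by
        rw [Multiset.eq_replicate]
        constructor
        · rw [Multiset.card_map]
          change Sᶜ.card = n - 2
          omega
        · intro b hb
          obtain ⟨v, hv, rfl⟩ := Multiset.mem_map.1 hb
          exact hC2eq v hv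
      have hrepl : Multiset.replicate (n - 2) 2
          = ({2} : Multiset ℕ) + Multiset.replicate (n - 2 - 1) 2 := by
        rw [Multiset.singleton_add, ← Multiset.replicate_succ]
        congr 1
        omega
      rw [degSeq, hUval, Multiset.map_add, hmapS, hmapC, hrepl]
      exact add_comm _ _
  · -- case 2 < p
    have hp2R : (2:ℝ) < (p:ℝ) := by exact_mod_cast hp3
    have hne : (p:ℝ) - 2 ≠ 0 := by linarith
    have hCsumR : ∑ v ∈ Sᶜ, ((T.degree v : ℝ)) = 2*(n:ℝ) - p - 2 := by
      have h1 : ((∑ v ∈ Sᶜ, T.degree v : ℕ) : ℝ) + p + 2 = 2*n := by exact_mod_cast hCsum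
      push_cast at h1
      linarith
    have hcardR : ((Sᶜ.card : ℕ) : ℝ) = (n:ℝ) - p := by
      have h1 : ((Sᶜ.card : ℕ) : ℝ) + p = n := by exact_mod_cast (by omega : Sᶜ.card + p = n)
      linarith
    have hb : ∀ v ∈ Sᶜ,
        f (T.degree v) ≤ (((p:ℝ) - T.degree v) * f 2 + ((T.degree v : ℝ) - 2) * f p)/((p:ℝ)-2) ∧
        (f (T.degree v) = (((p:ℝ) - T.degree v) * f 2 + ((T.degree v : ℝ) - 2) * f p)/((p:ℝ)-2) →
          ((T.degree v : ℝ)) = 2 ∨ ((T.degree v : ℝ)) = p) := by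
      intro v hv
      exact interp_bound f hf hp2R (by exact_mod_cast hC2 v hv) (by exact_mod_cast hdlep v hv)
    have hsumBound : ∑ v ∈ Sᶜ, ((((p:ℝ) - T.degree v) * f 2 + ((T.degree v : ℝ) - 2) * f p)/((p:ℝ)-2))
        = ((n:ℝ) - p - 1) * f 2 + f p := by
      rw [← Finset.sum_div, Finset.sum_add_distrib, ← Finset.sum_mul, ← Finset.sum_mul,
        Finset.sum_sub_distrib, Finset.sum_sub_distrib, Finset.sum_const, Finset.sum_const,
        hCsumR, nsmul_eq_mul, nsmul_eq_mul, hcardR, div_eq_iff hne]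
      ring
    have hle : ∑ v ∈ Sᶜ, f (T.degree v) ≤ ((n:ℝ) - p - 1) * f 2 + f p := by
      rw [← hsumBound]
      exact Finset.sum_le_sum (fun v hv => (hb v hv).1)
    constructor
    · rw [hHf]; linarith
    · intro heqH
      rw [hHf] at heqH
      have hsumeq : ∑ v ∈ Sᶜ, f (T.degree v)
          = ∑ v ∈ Sᶜ, ((((p:ℝ) - T.degree v) * f 2 + ((T.degree v : ℝ) - 2) * f p)/((p:ℝ)-2)) := by
        rw [hsumBound]; linarith
      have hptw := (Finset.sum_eq_sum_iff_of_le (fun v hv => (hb v hv).1)).1 hsumeq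
      have hdvals : ∀ v ∈ Sᶜ, T.degree v = 2 ∨ T.degree v = p := by
        intro v hv
        rcases (hb v hv).2 (hptw v hv) with h | h
        · left; exact_mod_cast h
        · right; exact_mod_cast h
      set A := Sᶜ.filter (fun v => T.degree v = p) with hAdef
      set B := Sᶜ.filter (fun v => ¬ T.degree v = p) with hBdef
      have hsplitAB : (∑ v ∈ A, (T.degree v - 2)) + (∑ v ∈ B, (T.degree v - 2))
          = ∑ v ∈ Sᶜ, (T.degree v - 2) :=
        Finset.sum_filter_add_sum_filter_not _ _ _
      have hAsum : ∑ v ∈ A, (T.degree v - 2) = A.card * (p - 2) := by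
        rw [Finset.sum_congr rfl (fun v hv => by rw [(Finset.mem_filter.1 hv).2])]
        simp [mul_comm]
      have hBsum : ∑ v ∈ B, (T.degree v - 2) = 0 := by
        apply Finset.sum_eq_zero
        intro v hv
        obtain ⟨hv1, hv2⟩ := Finset.mem_filter.1 hv
        rcases hdvals v hv1 with h | h
        · omega
        · exact absurd h hv2
      have hCe : ∑ v ∈ Sᶜ, (T.degree v - 2) = p - 2 := by omega
      have h1 : A.card * (p - 2) = p - 2 := by
        rw [hAsum, hBsum, add_zero, hCe] at hsplitAB
        exact hsplitAB
      have hAcard : A.card = 1 :=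
        Nat.eq_of_mul_eq_mul_right (by omega) (h1.trans (one_mul (p - 2)).symm)
      have hABcard : A.card + B.card = Sᶜ.card :=
        Finset.card_filter_add_card_filter_not _
      have hScardval : Sᶜ.card = n - p := by omega
      have hBcard : B.card = n - p - 1 := by omega
      have hBdeg : ∀ v ∈ B, T.degree v = 2 := by
        intro v hv
        obtain ⟨hv1, hv2⟩ := Finset.mem_filter.1 hv
        rcases hdvals v hv1 with h | h
        · exact h
        · exact absurd h hv2
      have hdisjAB : Disjoint A B := Finset.disjoint_filter_filter_not _ _ _
      have hCval : Sᶜ.val = A.val + B.val := by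
        rw [show Sᶜ = A.disjUnion B hdisjAB from by
          rw [Finset.disjUnion_eq_union, Finset.filter_union_filter_not_eq]]
        rfl
      have hmapA : Multiset.map (fun v => T.degree v) A.val = ({p} : Multiset ℕ) := by
        rw [show ({p} : Multiset ℕ) = Multiset.replicate 1 p from (Multiset.replicate_one p).symm,
          Multiset.eq_replicate]
        refine ⟨by rw [Multiset.card_map]; exact hAcard, ?_⟩
        intro b hb'
        obtain ⟨v, hv, rfl⟩ := Multiset.mem_map.1 hb'
        exact (Finset.mem_filter.1 hv).2
      have hmapB : Multiset.map (fun v => T.degree v) B.val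
          = Multiset.replicate (n - p - 1) 2 := by
        rw [Multiset.eq_replicate]
        refine ⟨by rw [Multiset.card_map]; exact hBcard, ?_⟩
        intro b hb'
        obtain ⟨v, hv, rfl⟩ := Multiset.mem_map.1 hb'
        exact hBdeg v hv
      rw [degSeq, hUval, hCval, Multiset.map_add, Multiset.map_add, hmapS, hmapA, hmapB]
      exact add_comm _ _
end

section
/- Let T be a tree on n vertices with exactly b branching vertices, where 1 ≤ b ≤ n/2 − 1, and let f be a strictly convex real-valued function. Then H_f(T) ≥ b·f(3) + (n−2b−2)·f(2) + (b+2)·f(1), and equality holds if and only if the degree sequence of T consists of the value 3 with multiplicity b, the value 2 with multiplicity n−2b−2, and the value 1 with multiplicity b+2. -/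
open scoped Classical

/-!
With `Δ = f 2 - f 1` and `κ = f 3 - 2 f 2 + f 1 > 0`, strict convexity gives for every degree `d`
`f d ≥ f 1 + (d - 1) Δ + [3 ≤ d] κ`, with equality exactly when `d ∈ {1, 2, 3}`. In a tree the
degrees sum to `2n - 2` and `b` of them are at least 3, so the right-hand sides sum to the claimed
bound. Equality forces every degree into `{1, 2, 3}`, and then the vertex count and the degree sum
determine the multiplicities of 1 and 2.
-/

open Finset

namespace StrictConvexOn

variable {s : Set ℝ} {f : ℝ → ℝ}

lemma add_mul_slope_lt_left (hf : StrictConvexOn ℝ s f) {x a b : ℝ} (hx : x ∈ s) (hb : b ∈ s)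
    (hxa : x < a) (hab : a < b) :
    f a + (x - a) * ((f b - f a) / (b - a)) < f x := by
  have hslope := hf.slope_strict_mono_adjacent hx hb hxa hab
  rw [div_lt_iff₀ (sub_pos.2 hxa)] at hslope
  linarith

lemma add_mul_slope_lt_right (hf : StrictConvexOn ℝ s f) {a b x : ℝ} (ha : a ∈ s) (hx : x ∈ s)
    (hab : a < b) (hbx : b < x) :
    f b + (x - b) * ((f b - f a) / (b - a)) < f x := by
  have hslope := hf.slope_strict_mono_adjacent ha hx hab hbx
  rw [lt_div_iff₀ (sub_pos.2 hbx)] at hslope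
  linarith

end StrictConvexOn

noncomputable def degreeMinorant (f : ℝ → ℝ) (d : ℕ) : ℝ :=
  f 1 + (d - 1) * (f 2 - f 1) + if 3 ≤ d then f 3 - 2 * f 2 + f 1 else 0

section degreeMinorant

variable {f : ℝ → ℝ} {d : ℕ}

lemma degreeMinorant_eq_self (h1 : 1 ≤ d) (h3 : d ≤ 3) : degreeMinorant f d = f d := by
  interval_cases d
  all_goals norm_num [degreeMinorant]
  ring

lemma degreeMinorant_lt (hf : StrictConvexOn ℝ Set.univ f) (hd : d = 0 ∨ 4 ≤ d) :
    degreeMinorant f d < f d := by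
  rcases hd with rfl | hd
  · have h := hf.add_mul_slope_lt_left (x := 0) (a := 1) (b := 2) trivial trivial
      (by norm_num) (by norm_num)
    norm_num [degreeMinorant] at h ⊢
    linarith
  · have h123 := hf.add_mul_slope_lt_right (a := 1) (b := 2) (x := 3) trivial trivial
      (by norm_num) (by norm_num)
    have h23d := hf.add_mul_slope_lt_right (a := 2) (b := 3) (x := d) trivial trivial
      (by norm_num) (by exact_mod_cast hd)
    have hd3 : (3 : ℝ) ≤ d := by exact_mod_cast (by omega : 3 ≤ d)
    norm_num [degreeMinorant, show 3 ≤ d by omega] at h123 h23d ⊢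
    nlinarith

lemma degreeMinorant_le (hf : StrictConvexOn ℝ Set.univ f) (d : ℕ) : degreeMinorant f d ≤ f d := by
  by_cases hd : 1 ≤ d ∧ d ≤ 3
  · exact (degreeMinorant_eq_self hd.1 hd.2).le
  · exact (degreeMinorant_lt hf (by omega)).le

lemma degreeMinorant_eq_iff (hf : StrictConvexOn ℝ Set.univ f) :
    degreeMinorant f d = f d ↔ 1 ≤ d ∧ d ≤ 3 := by
  refine ⟨fun h => ?_, fun hd => degreeMinorant_eq_self hd.1 hd.2⟩
  by_contra hd
  exact (degreeMinorant_lt hf (by omega)).ne h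

end degreeMinorant

lemma Multiset.eq_replicate_three_two_one {s : Multiset ℕ}
    (hs : ∀ d ∈ s, 1 ≤ d ∧ d ≤ 3) :
    s = replicate (s.count 3) 3 + replicate (s.count 2) 2 + replicate (s.count 1) 1 := by
  ext d
  simp only [count_add, count_replicate]
  by_cases hd : 1 ≤ d ∧ d ≤ 3
  · obtain ⟨h1, h3⟩ := hd
    interval_cases d <;> simp
  · have : d ∉ s := fun hmem => hd (hs d hmem)
    simp only [count_eq_zero_of_notMem this]
    split_ifs <;> omega

section degSeq

variable {V : Type*} [Fintype V] (G : SimpleGraph V)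

lemma mem_degSeq {d : ℕ} : d ∈ degSeq G ↔ ∃ v, G.degree v = d := by
  simp [degSeq]

lemma card_degSeq : Multiset.card (degSeq G) = Fintype.card V := by
  simp [degSeq]

lemma sum_degSeq : (degSeq G).sum = ∑ v, G.degree v := rfl

lemma count_degSeq (d : ℕ) : (degSeq G).count d = #{v | G.degree v = d} := by
  rw [degSeq, Multiset.count_map]
  simp_rw [eq_comm (a := d)]
  rfl

lemma sum_degreeMinorant_le_Hf {f : ℝ → ℝ} (hf : StrictConvexOn ℝ Set.univ f) :
    ∑ v, degreeMinorant f (G.degree v) ≤ Hf G f :=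
  sum_le_sum fun _ _ => degreeMinorant_le hf _

lemma Hf_eq_sum_degreeMinorant_iff {f : ℝ → ℝ} (hf : StrictConvexOn ℝ Set.univ f) :
    Hf G f = ∑ v, degreeMinorant f (G.degree v) ↔ ∀ v, 1 ≤ G.degree v ∧ G.degree v ≤ 3 := by
  rw [eq_comm, Hf, sum_eq_sum_iff_of_le fun _ _ => degreeMinorant_le hf _]
  simp [degreeMinorant_eq_iff hf]

end degSeq

namespace SimpleGraph.IsTree

variable {V : Type*} [Fintype V] {T : SimpleGraph V} {n b : ℕ}

lemma sum_degrees_add_two (hT : T.IsTree) : ∑ v, T.degree v + 2 = 2 * Fintype.card V := by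
  rw [sum_degrees_eq_twice_card_edges, ← hT.card_edgeFinset]
  ring

lemma sum_degreeMinorant (hT : T.IsTree) (f : ℝ → ℝ) (hn : n = Fintype.card V)
    (hb : b = #{v | 3 ≤ T.degree v}) :
    ∑ v, degreeMinorant f (T.degree v) =
      b * f 3 + ((n : ℝ) - 2 * b - 2) * f 2 + (b + 2) * f 1 := by
  have hsum : (∑ v, T.degree v : ℝ) + 2 = 2 * n := by
    exact_mod_cast hn ▸ hT.sum_degrees_add_two
  simp only [degreeMinorant, sum_add_distrib, ← sum_mul, sum_sub_distrib, ← sum_filter,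
    sum_const, card_univ, nsmul_eq_mul, ← hn, ← hb]
  linear_combination (f 2 - f 1) * hsum

lemma degSeq_eq_iff (hT : T.IsTree) (hn : n = Fintype.card V)
    (hb : b = #{v | 3 ≤ T.degree v}) :
    degSeq T = Multiset.replicate b 3 + Multiset.replicate (n - 2 * b - 2) 2
        + Multiset.replicate (b + 2) 1 ↔ ∀ v, 1 ≤ T.degree v ∧ T.degree v ≤ 3 := by
  constructor
  · intro hseq v
    have hmem : T.degree v ∈ degSeq T := (mem_degSeq T).2 ⟨v, rfl⟩
    simp only [hseq, Multiset.mem_add, Multiset.mem_replicate] at hmem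
    omega
  · intro hdeg
    have hdecomp := Multiset.eq_replicate_three_two_one (s := degSeq T) fun d hd => by
      obtain ⟨v, rfl⟩ := (mem_degSeq T).1 hd
      exact hdeg v
    have hcount3 : (degSeq T).count 3 = b := by
      rw [count_degSeq, hb]
      congr 1
      exact filter_congr fun v _ => by have := hdeg v; omega
    have hcard := card_degSeq T
    have hsum := sum_degSeq T ▸ hT.sum_degrees_add_two
    rw [hdecomp] at hcard hsum
    simp only [Multiset.card_add, Multiset.card_replicate, Multiset.sum_add,
      Multiset.sum_replicate, smul_eq_mul] at hcard hsum
    rw [hdecomp, hcount3, show (degSeq T).count 2 = n - 2 * b - 2 by omega,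
      show (degSeq T).count 1 = b + 2 by omega]

end SimpleGraph.IsTree

theorem stmt12_general {V : Type*} [Fintype V] (T : SimpleGraph V) (hT : T.IsTree)
    (n b : ℕ) (hn : n = Fintype.card V)
    (hb : b = (Finset.univ.filter (fun v => 3 ≤ T.degree v)).card)
    (f : ℝ → ℝ) (hf : StrictConvexOn ℝ Set.univ f) :
    (b : ℝ) * f 3 + ((n : ℝ) - 2 * (b : ℝ) - 2) * f 2 + ((b : ℝ) + 2) * f 1 ≤ Hf T f ∧
    (Hf T f = (b : ℝ) * f 3 + ((n : ℝ) - 2 * (b : ℝ) - 2) * f 2 + ((b : ℝ) + 2) * f 1 ↔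
      degSeq T = Multiset.replicate b 3 + Multiset.replicate (n - 2 * b - 2) 2
        + Multiset.replicate (b + 2) 1) := by
  rw [← hT.sum_degreeMinorant f hn hb, Hf_eq_sum_degreeMinorant_iff T hf, hT.degSeq_eq_iff hn hb]
  exact ⟨sum_degreeMinorant_le_Hf T hf, Iff.rfl⟩

theorem stmt12 {V : Type*} [Fintype V] (T : SimpleGraph V) (hT : T.IsTree)
    (n b : ℕ) (hn : n = Fintype.card V)
    (hb : b = (Finset.univ.filter (fun v => 3 ≤ T.degree v)).card)
    (hb1 : 1 ≤ b) (hbn : (b : ℝ) ≤ (n : ℝ) / 2 - 1)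
    (f : ℝ → ℝ) (hf : StrictConvexOn ℝ Set.univ f) :
    (b : ℝ) * f 3 + ((n : ℝ) - 2 * (b : ℝ) - 2) * f 2 + ((b : ℝ) + 2) * f 1 ≤ Hf T f ∧
    (Hf T f = (b : ℝ) * f 3 + ((n : ℝ) - 2 * (b : ℝ) - 2) * f 2 + ((b : ℝ) + 2) * f 1 ↔
      degSeq T = Multiset.replicate b 3 + Multiset.replicate (n - 2 * b - 2) 2
        + Multiset.replicate (b + 2) 1) :=
  stmt12_general T hT n b hn hb f hf
end

section
/- Let T be a tree on 2m vertices that has a perfect matching, where m ≥ 2, and let f be a strictly convex real-valued function. Then H_f(T) ≥ 2(m−1)·f(2) + 2·f(1), with equality only if T is isomorphic to the path P_{2m}. -/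
/-!
On a nontrivial tree every degree is at least `1` and the degrees sum to `2(n - 1)`. A strictly
convex `f` lies on or above its secant line `L` through `1` and `2` at every positive integer,
strictly above it from `3` on, so `H_f(T) ≥ Σ_v L(d(v)) = (n - 2) f(2) + 2 f(1)`, with equality
only when all degrees are at most `2`. A tree of maximum degree at most `2` is a path: from a
leaf `u`, an induction on the distance shows that `dist u` is injective, hence a bijection onto
`Fin n` that carries adjacency to adjacency in `pathGraph n`.
-/

open scoped Classical

noncomputable def secantLine (f : ℝ → ℝ) (a b x : ℝ) : ℝ :=
  f a + (f b - f a) / (b - a) * (x - a)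

lemma StrictConvexOn.secantLine_lt {s : Set ℝ} {f : ℝ → ℝ} (hf : StrictConvexOn ℝ s f)
    {a b x : ℝ} (ha : a ∈ s) (hx : x ∈ s) (hab : a < b) (hbx : b < x) :
    secantLine f a b x < f x := by
  have hslope := hf.slope_strict_mono_adjacent ha hx hab hbx
  rw [div_lt_div_iff₀ (by linarith) (by linarith)] at hslope
  have hrise : (f b - f a) / (b - a) * (x - a) < f x - f a := by
    rw [div_mul_eq_mul_div, div_lt_iff₀ (by linarith)]
    nlinarith
  unfold secantLine
  linarith

lemma StrictConvexOn.secantLine_one_two_le {f : ℝ → ℝ} (hf : StrictConvexOn ℝ Set.univ f)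
    {d : ℕ} (hd : 1 ≤ d) : secantLine f 1 2 d ≤ f d := by
  rcases Nat.lt_or_ge d 3 with h | h
  · interval_cases d <;> norm_num [secantLine]
  · exact (hf.secantLine_lt trivial trivial one_lt_two (by exact_mod_cast h)).le

namespace SimpleGraph

variable {V : Type*} {G : SimpleGraph V}

lemma exists_adj_dist_eq_of_dist_eq_add_one {u v : V} {k : ℕ} (h : G.dist u v = k + 1) :
    ∃ w, G.Adj w v ∧ G.dist u w = k := by
  have hr : G.Reachable u v := .of_dist_ne_zero (by omega)
  obtain ⟨p, hp⟩ := hr.exists_walk_length_eq_dist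
  have hnil : ¬p.Nil := by rw [← Walk.length_eq_zero_iff]; omega
  have hadj := p.adj_penultimate hnil
  refine ⟨p.penultimate, hadj, le_antisymm ?_ ?_⟩
  · simpa [Walk.length_dropLast, hp, h] using dist_le p.dropLast
  · have := hadj.reachable.dist_triangle_right u
    rw [dist_eq_one_iff_adj.mpr hadj] at this
    omega

section Degree

variable [Fintype V] [DecidableRel G.Adj]

lemma eq_or_eq_or_eq_of_adj_of_degree_le_two {v a b c : V} (hdeg : G.degree v ≤ 2)
    (ha : G.Adj v a) (hb : G.Adj v b) (hc : G.Adj v c) : a = b ∨ a = c ∨ b = c := by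
  by_contra! ⟨hab, hac, hbc⟩
  have hsub : ({a, b, c} : Finset V) ⊆ G.neighborFinset v := by
    simp [Finset.insert_subset_iff, ha, hb, hc]
  have := Finset.card_le_card hsub
  rw [Finset.card_eq_three.mpr ⟨a, b, c, hab, hac, hbc, rfl⟩, card_neighborFinset_eq_degree] at this
  omega

lemma Connected.dist_injective_of_degree_le_two (hG : G.Connected) {u : V} (hu : G.degree u = 1)
    (hdeg : ∀ v, G.degree v ≤ 2) : Function.Injective (G.dist u) := by
  suffices ∀ k v w, G.dist u v = k → G.dist u w = k → v = w from
    fun v w h => this _ v w rfl h.symm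
  intro k
  induction k using Nat.strong_induction_on with
  | _ k ih =>
  intro v w hv hw
  rcases k with _ | k
  · rw [hG.dist_eq_zero_iff] at hv hw
    exact hv ▸ hw
  obtain ⟨x, hxv, hx⟩ := exists_adj_dist_eq_of_dist_eq_add_one hv
  obtain ⟨x', hxw, hx'⟩ := exists_adj_dist_eq_of_dist_eq_add_one hw
  obtain rfl : x = x' := ih k (by omega) x x' hx hx'
  rcases k with _ | k
  · obtain rfl : u = x := hG.dist_eq_zero_iff.mp hx
    exact (degree_eq_one_iff_existsUnique_adj.mp hu).unique hxv hxw
  -- `x` already has its own predecessor `y` as a neighbour, leaving room for only one of `v`, `w`.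
  obtain ⟨y, hyx, hy⟩ := exists_adj_dist_eq_of_dist_eq_add_one hx
  rcases eq_or_eq_or_eq_of_adj_of_degree_le_two (hdeg x) hxv hxw hyx.symm with h | rfl | rfl
  · exact h
  · omega
  · omega

theorem IsTree.nonempty_iso_pathGraph_of_degree_le_two (hG : G.IsTree)
    (hdeg : ∀ v, G.degree v ≤ 2) : Nonempty (G ≃g pathGraph (Fintype.card V)) := by
  obtain ⟨u, hinj⟩ : ∃ u, Function.Injective (G.dist u) := by
    cases subsingleton_or_nontrivial V
    · exact ⟨hG.connected.nonempty.some, Function.injective_of_subsingleton _⟩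
    · obtain ⟨u, hu⟩ := hG.exists_vert_degree_one_of_nontrivial
      exact ⟨u, hG.connected.dist_injective_of_degree_le_two hu hdeg⟩
  have hlt : ∀ v, G.dist u v < Fintype.card V := fun v => by
    obtain ⟨p, hp, hlen⟩ := hG.connected.exists_path_of_dist u v
    exact hlen ▸ hp.length_lt
  let e : V → Fin (Fintype.card V) := fun v => ⟨G.dist u v, hlt v⟩
  have he : Function.Bijective e := (Fintype.bijective_iff_injective_and_card e).mpr
    ⟨fun v w h => hinj (Fin.mk.inj_iff.mp h), (Fintype.card_fin _).symm⟩
  refine ⟨⟨Equiv.ofBijective e he, fun {a b} => ?_⟩⟩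
  change (pathGraph _).Adj (e a) (e b) ↔ G.Adj a b
  rw [pathGraph_adj]
  change G.dist u a + 1 = G.dist u b ∨ G.dist u b + 1 = G.dist u a ↔ _
  refine ⟨fun h => ?_, fun h => by grind [hG.dist_eq_dist_add_one_of_adj u h]⟩
  rcases h with h | h
  · obtain ⟨x, hxb, hx⟩ := exists_adj_dist_eq_of_dist_eq_add_one h.symm
    exact hinj hx ▸ hxb
  · obtain ⟨x, hxa, hx⟩ := exists_adj_dist_eq_of_dist_eq_add_one h.symm
    exact (hinj hx ▸ hxa).symm

end Degree

variable [Fintype V]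

lemma IsTree.sum_degrees_eq (hG : G.IsTree) :
    ∑ v, (G.degree v : ℝ) = 2 * (Fintype.card V - 1) := by
  have hcard : 1 ≤ Fintype.card V := Fintype.card_pos_iff.mpr hG.connected.nonempty
  rw [← Nat.cast_sum, G.sum_degrees_eq_twice_card_edges, ← hG.card_edgeFinset]
  push_cast
  ring

lemma IsTree.sum_secantLine (hG : G.IsTree) (f : ℝ → ℝ) :
    ∑ v, secantLine f 1 2 (G.degree v) = (Fintype.card V - 2) * f 2 + 2 * f 1 := by
  simp only [secantLine, Finset.sum_add_distrib, ← Finset.mul_sum, Finset.sum_sub_distrib,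
    hG.sum_degrees_eq, Finset.sum_const, Finset.card_univ, nsmul_eq_mul]
  ring

variable [Nontrivial V] {f : ℝ → ℝ}

lemma IsTree.secantLine_degree_le (hG : G.IsTree) (hf : StrictConvexOn ℝ Set.univ f) (v : V) :
    secantLine f 1 2 (G.degree v) ≤ f (G.degree v) :=
  hf.secantLine_one_two_le (hG.preconnected.degree_pos_of_nontrivial v)

theorem IsTree.le_Hf (hG : G.IsTree) (hf : StrictConvexOn ℝ Set.univ f) :
    (Fintype.card V - 2) * f 2 + 2 * f 1 ≤ Hf G f := by
  rw [← hG.sum_secantLine f]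
  exact Finset.sum_le_sum fun v _ => hG.secantLine_degree_le hf v

theorem IsTree.degree_le_two_of_Hf_eq (hG : G.IsTree) (hf : StrictConvexOn ℝ Set.univ f)
    (h : Hf G f = (Fintype.card V - 2) * f 2 + 2 * f 1) (v : V) : G.degree v ≤ 2 := by
  rw [← hG.sum_secantLine f, Hf, eq_comm,
    Finset.sum_eq_sum_iff_of_le fun v _ => hG.secantLine_degree_le hf v] at h
  by_contra! hv
  exact (hf.secantLine_lt trivial trivial one_lt_two (by exact_mod_cast hv)).ne (h v (Finset.mem_univ v))

end SimpleGraph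

theorem stmt13_general {V : Type*} [Fintype V] (T : SimpleGraph V) (hT : T.IsTree)
    (m : ℕ) (hcard : Fintype.card V = 2 * m)
    (f : ℝ → ℝ) (hf : StrictConvexOn ℝ Set.univ f) :
    2 * ((m : ℝ) - 1) * f 2 + 2 * f 1 ≤ Hf T f ∧
    (Hf T f = 2 * ((m : ℝ) - 1) * f 2 + 2 * f 1 →
      Nonempty (T ≃g SimpleGraph.pathGraph (2 * m))) := by
  have : Nontrivial V := by
    have := Fintype.card_pos_iff.mpr hT.connected.nonempty
    rw [← Fintype.one_lt_card_iff_nontrivial]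
    omega
  have hcoeff : 2 * ((m : ℝ) - 1) = Fintype.card V - 2 := by
    rw [hcard]
    push_cast
    ring
  rw [hcoeff, ← hcard]
  exact ⟨hT.le_Hf hf, fun h => hT.nonempty_iso_pathGraph_of_degree_le_two
    (hT.degree_le_two_of_Hf_eq hf h)⟩

theorem stmt13 {V : Type*} [Fintype V] (T : SimpleGraph V) (hT : T.IsTree)
    (m : ℕ) (hm : 2 ≤ m) (hcard : Fintype.card V = 2 * m)
    (hpm : ∃ M : T.Subgraph, M.IsPerfectMatching)
    (f : ℝ → ℝ) (hf : StrictConvexOn ℝ Set.univ f) :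
    2 * ((m : ℝ) - 1) * f 2 + 2 * f 1 ≤ Hf T f ∧
    (Hf T f = 2 * ((m : ℝ) - 1) * f 2 + 2 * f 1 →
      Nonempty (T ≃g SimpleGraph.pathGraph (2 * m))) :=
  stmt13_general T hT m hcard f hf
end

section
/- Let n ≥ 2 and let x_1, x_2, …, x_n be positive integers with x_i ≥ 2 for all i and Σ_{i=1}^n x_i = M. Define f(x_1, …, x_n) = Σ_{1 ≤ i < j ≤ n} x_i x_j. Then f(x_1, …, x_n) attains its minimum value (over all such integer tuples with the given sum M) if and only if there exists l ∈ {1, …, n} such that x_l = M − 2(n−1) and x_i = 2 for all i ≠ l. -/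
/-- `fsum n x = Σ_{1 ≤ i < j ≤ n} x_i x_j`, the sum of products over all
unordered pairs of distinct indices. -/
def fsum (n : ℕ) (x : Fin n → ℕ) : ℕ :=
  ∑ i : Fin n, ∑ j ∈ Finset.univ.filter (fun j => i < j), x i * x j

/-!
Lowering every coordinate by 2 changes `f` by an amount that depends only on `n` and `M`, so
minimising `f(x)` amounts to minimising `f(x - 2)` over nonnegative tuples of sum `M - 2n`.
There the minimum is `0`, attained exactly when at most one coordinate is nonzero, i.e. when
all `x_i` but one equal `2`.
-/

open Finset

lemma fsum_eq_sum_sum_ite (n : ℕ) (x : Fin n → ℕ) :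
    fsum n x = ∑ i, ∑ j, if i < j then x i * x j else 0 := by
  simp only [fsum, sum_filter]

lemma sq_sum_eq_sum_sq_add_two_mul_fsum (n : ℕ) (x : Fin n → ℕ) :
    (∑ i, x i) ^ 2 = ∑ i, x i ^ 2 + 2 * fsum n x := by
  have hsplit : ∀ i j, x i * x j = (if i < j then x i * x j else 0) +
      (if i = j then x i * x j else 0) + (if j < i then x j * x i else 0) := by
    intro i j
    rcases lt_trichotomy i j with h | rfl | h
    · simp [h, h.ne, h.not_gt]
    · simp
    · simp [h, h.ne', h.not_gt, mul_comm]
  have hlower : ∑ i, ∑ j, (if j < i then x j * x i else 0) = fsum n x := by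
    rw [sum_comm, fsum_eq_sum_sum_ite]
  rw [sq, sum_mul_sum, sum_congr rfl fun i _ => sum_congr rfl fun j _ => hsplit i j]
  simp only [sum_add_distrib, sum_ite_eq, mem_univ, if_true, hlower,
    ← fsum_eq_sum_sum_ite, sq]
  ring

-- `fsum (a + c) - fsum a` depends only on `n`, `c` and `∑ a`; stated additively to avoid
-- truncated subtraction.
lemma fsum_add_const_add_fsum (n c : ℕ) (a b : Fin n → ℕ) (h : ∑ i, a i = ∑ i, b i) :
    fsum n (fun i => a i + c) + fsum n b = fsum n (fun i => b i + c) + fsum n a := by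
  have hsq : ∀ z : Fin n → ℕ,
      ∑ i, (z i + c) ^ 2 = ∑ i, z i ^ 2 + 2 * c * ∑ i, z i + n * c ^ 2 := fun z => by
    simp only [add_sq, sum_add_distrib, ← sum_mul, ← mul_sum, sum_const, card_univ,
      Fintype.card_fin, smul_eq_mul]
    ring
  have ea := sq_sum_eq_sum_sq_add_two_mul_fsum n (fun i => a i + c)
  have eb := sq_sum_eq_sum_sq_add_two_mul_fsum n (fun i => b i + c)
  have ea' := sq_sum_eq_sum_sq_add_two_mul_fsum n a
  have eb' := sq_sum_eq_sum_sq_add_two_mul_fsum n b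
  simp only [hsq, sum_add_distrib, sum_const, card_univ, Fintype.card_fin, smul_eq_mul, h]
    at ea eb ea'
  linarith

lemma sum_tsub_const (n c : ℕ) (x : Fin n → ℕ) (hx : ∀ i, c ≤ x i) :
    ∑ i, (x i - c) = ∑ i, x i - n * c := by
  rw [sum_tsub_distrib _ fun i _ => hx i, sum_const, card_univ, Fintype.card_fin, smul_eq_mul]

lemma fsum_le_fsum_iff_fsum_tsub_le (n c : ℕ) {x y : Fin n → ℕ} (hx : ∀ i, c ≤ x i)
    (hy : ∀ i, c ≤ y i) (h : ∑ i, x i = ∑ i, y i) :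
    fsum n x ≤ fsum n y ↔ fsum n (fun i => x i - c) ≤ fsum n (fun i => y i - c) := by
  have key := fsum_add_const_add_fsum n c (fun i => x i - c) (fun i => y i - c)
    (by rw [sum_tsub_const n c x hx, sum_tsub_const n c y hy, h])
  rw [funext fun i => Nat.sub_add_cancel (hx i), funext fun i => Nat.sub_add_cancel (hy i)]
    at key
  omega

lemma fsum_eq_zero_iff (n : ℕ) [NeZero n] (a : Fin n → ℕ) :
    fsum n a = 0 ↔ ∃ l, ∀ i, i ≠ l → a i = 0 := by
  simp only [fsum, sum_eq_zero_iff, mem_univ, mem_filter, true_and, forall_const, mul_eq_zero]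
  constructor
  · intro h
    by_cases hzero : ∀ i, a i = 0
    · exact ⟨0, fun i _ => hzero i⟩
    obtain ⟨l, hl⟩ := not_forall.1 hzero
    refine ⟨l, fun i hil => ?_⟩
    rcases hil.lt_or_gt with hi | hi
    · exact (h i l hi).resolve_right hl
    · exact (h l i hi).resolve_left hl
  · rintro ⟨l, hl⟩ i j hij
    by_cases hi : i = l
    · exact Or.inr (hl j (hi ▸ hij.ne'))
    · exact Or.inl (hl i hi)

lemma forall_fsum_le_iff_fsum_tsub_eq_zero (n c M : ℕ) {x : Fin n → ℕ} (hx : ∀ i, c ≤ x i)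
    (hsum : ∑ i, x i = M) :
    (∀ y : Fin n → ℕ, (∀ i, c ≤ y i) → ∑ i, y i = M → fsum n x ≤ fsum n y) ↔
      fsum n (fun i => x i - c) = 0 := by
  constructor
  · intro hmin
    rcases isEmpty_or_nonempty (Fin n) with _ | ⟨⟨l⟩⟩
    · simp [fsum]
    have hle : n * c ≤ M := by
      simpa [← hsum] using card_nsmul_le_sum univ x c fun i _ => hx i
    set y : Fin n → ℕ := fun i => (Pi.single l (M - n * c) : Fin n → ℕ) i + c
    have hy : ∀ i, c ≤ y i := fun i => Nat.le_add_left c _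
    have hysum : ∑ i, y i = M := by
      simp only [y, sum_add_distrib, sum_pi_single', mem_univ, if_true, sum_const, card_univ,
        Fintype.card_fin, smul_eq_mul]
      omega
    have hyc : fsum n (fun i => y i - c) = 0 := by
      have : NeZero n := NeZero.of_pos l.pos
      simp only [y, Nat.add_sub_cancel]
      exact (fsum_eq_zero_iff n _).2 ⟨l, fun i hi => Pi.single_eq_of_ne hi _⟩
    have := (fsum_le_fsum_iff_fsum_tsub_le n c hx hy (hsum.trans hysum.symm)).1
      (hmin y hy hysum)
    omega
  · intro h0 y hy hysum
    rw [fsum_le_fsum_iff_fsum_tsub_le n c hx hy (hsum.trans hysum.symm), h0]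
    exact Nat.zero_le _

lemma sum_eq_add_mul_of_forall_ne (n c : ℕ) {x : Fin n → ℕ} (l : Fin n)
    (h : ∀ i, i ≠ l → x i = c) : ∑ i, x i = x l + (n - 1) * c := by
  rw [← add_sum_erase _ _ (mem_univ l), sum_congr rfl fun i hi => h i (ne_of_mem_erase hi),
    sum_const, card_erase_of_mem (mem_univ l), card_univ, Fintype.card_fin, smul_eq_mul]

theorem stmt16 (n : ℕ) (hn : 2 ≤ n) (M : ℕ) (x : Fin n → ℕ)
    (hx : ∀ i, 2 ≤ x i) (hsum : ∑ i, x i = M) :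
    (∀ y : Fin n → ℕ, (∀ i, 2 ≤ y i) → ∑ i, y i = M → fsum n x ≤ fsum n y) ↔
    (∃ l : Fin n, x l = M - 2 * (n - 1) ∧ ∀ i : Fin n, i ≠ l → x i = 2) := by
  have : NeZero n := ⟨by omega⟩
  rw [forall_fsum_le_iff_fsum_tsub_eq_zero n 2 M hx hsum, fsum_eq_zero_iff]
  refine exists_congr fun l => ⟨fun h => ?_, fun ⟨_, h⟩ i hi => by simp [h i hi]⟩
  have hrest : ∀ i, i ≠ l → x i = 2 := fun i hi => by have := h i hi; have := hx i; omega
  have := sum_eq_add_mul_of_forall_ne n 2 l hrest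
  exact ⟨by omega, hrest⟩
end

section
/- For every simple graph G with at least one edge, (1/√2)·M1(G) ≤ SO(G) < M1(G), where the left inequality is an equality if and only if every edge uv of G satisfies d(u) = d(v). -/
open scoped Classical

/-- The Sombor index: the sum over all edges `uv` of `√(d(u)² + d(v)²)`. -/
noncomputable def SO {V : Type*} [Fintype V] (G : SimpleGraph V) : ℝ :=
  ∑ e ∈ G.edgeFinset,
    Sym2.lift ⟨fun u v => Real.sqrt ((G.degree u : ℝ) ^ 2 + (G.degree v : ℝ) ^ 2),
      fun u v => by simp only [add_comm]⟩ e

open Finset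

theorem aux_sum_sym2 {V} [Fintype V] (G : SimpleGraph V) [DecidableRel G.Adj] (F : Sym2 V → ℝ) :
    ∑ v, ∑ w ∈ G.neighborFinset v, F s(v, w) = 2 * ∑ e ∈ G.edgeFinset, F e := by
  classical
  have h1 : ∑ d : G.Dart, F d.edge = ∑ v, ∑ w ∈ G.neighborFinset v, F s(v, w) := by
    rw [← Finset.sum_fiberwise univ (fun d : G.Dart => d.fst) (fun d => F d.edge)]
    refine Finset.sum_congr rfl fun v _ => ?_
    have hfib := G.dart_fst_fiber v
    rw [show ({d : G.Dart | d.fst = v} : Finset _) = univ.filter (fun d => d.fst = v) from rfl] at hfib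
    rw [hfib, Finset.sum_image (fun a _ b _ h => G.dartOfNeighborSet_injective v h)]
    rw [← Finset.sum_attach (G.neighborFinset v) (fun w => F s(v, w))]
    apply Finset.sum_nbij' (i := fun w => (⟨w.1, (G.mem_neighborFinset v w.1).mpr w.2⟩ : {x // x ∈ G.neighborFinset v}))
      (j := fun w => (⟨w.1, (G.mem_neighborFinset v w.1).mp w.2⟩ : G.neighborSet v))
    · intros; simp
    · intros; simp
    · intro a _; rfl
    · intro a _; rfl
    · intro w _; rfl
  have h2 : ∑ d : G.Dart, F d.edge = 2 * ∑ e ∈ G.edgeFinset, F e := by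
    rw [← Finset.sum_fiberwise_of_maps_to (fun d _ => by simp [SimpleGraph.Dart.edge_mem] : ∀ d ∈ univ, (d : G.Dart).edge ∈ G.edgeFinset) (fun d => F d.edge)]
    rw [Finset.mul_sum]
    refine Finset.sum_congr rfl fun e he => ?_
    have hce : #{d : G.Dart | d.edge = e} = 2 := G.dart_edge_fiber_card e (by simpa using he)
    rw [Finset.sum_congr rfl (fun d hd => by rw [show d.edge = e from by simpa using hd]),
      Finset.sum_const, hce]
    simp [two_smul, two_mul]
  rw [← h1, h2]

theorem aux_deg_swap {V} [Fintype V] (G : SimpleGraph V) [DecidableRel G.Adj] :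
    ∑ v, ∑ w ∈ G.neighborFinset v, (G.degree w : ℝ) = ∑ v, (G.degree v : ℝ) ^ 2 := by
  rw [Finset.sum_comm' (s' := fun y => G.neighborFinset y) (t' := univ)
    (fun x y => by simp [SimpleGraph.mem_neighborFinset, G.adj_comm x y])]
  refine Finset.sum_congr rfl fun v _ => ?_
  rw [Finset.sum_const, SimpleGraph.card_neighborFinset_eq_degree, nsmul_eq_mul, sq]

theorem aux_M1_eq {V} [Fintype V] (G : SimpleGraph V) [DecidableRel G.Adj] :
    ∑ v, (G.degree v : ℝ) ^ 2 =
      ∑ e ∈ G.edgeFinset, Sym2.lift ⟨fun u v => (G.degree u : ℝ) + G.degree v,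
        fun u v => by simp [add_comm]⟩ e := by
  have h := aux_sum_sym2 G (Sym2.lift ⟨fun u v => (G.degree u : ℝ) + G.degree v,
    fun u v => by simp [add_comm]⟩)
  have h2 : ∑ v, ∑ w ∈ G.neighborFinset v, ((G.degree v : ℝ) + G.degree w)
      = 2 * ∑ v, (G.degree v : ℝ) ^ 2 := by
    rw [Finset.sum_congr rfl (fun v _ => Finset.sum_add_distrib), Finset.sum_add_distrib,
      aux_deg_swap, two_mul]
    congr 1
    refine Finset.sum_congr rfl fun v _ => ?_
    rw [Finset.sum_const, SimpleGraph.card_neighborFinset_eq_degree, nsmul_eq_mul, sq]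
  simp only [Sym2.lift_mk] at h
  linarith [h, h2]

theorem aux_pt_le {a b : ℝ} (ha : 0 ≤ a) (hb : 0 ≤ b) :
    (1 / Real.sqrt 2) * (a + b) ≤ Real.sqrt (a ^ 2 + b ^ 2) := by
  have h2 : (0:ℝ) < Real.sqrt 2 := Real.sqrt_pos.mpr (by norm_num)
  have hsq : Real.sqrt 2 ^ 2 = 2 := Real.sq_sqrt (by norm_num)
  have hx : 0 ≤ (1 / Real.sqrt 2) * (a + b) := by positivity
  refine (Real.le_sqrt hx (by positivity)).mpr ?_
  have h3 : ((1 / Real.sqrt 2) * (a + b)) ^ 2 = (a+b)^2 / 2 := by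
    field_simp
    rw [hsq]; ring
  rw [h3]
  nlinarith [sq_nonneg (a - b)]

theorem aux_pt_lt {a b : ℝ} (ha : 0 < a) (hb : 0 < b) :
    Real.sqrt (a ^ 2 + b ^ 2) < a + b := by
  refine (Real.sqrt_lt' (by linarith)).mpr ?_
  nlinarith

theorem aux_pt_eq {a b : ℝ} (ha : 0 ≤ a) (hb : 0 ≤ b) :
    (1 / Real.sqrt 2) * (a + b) = Real.sqrt (a ^ 2 + b ^ 2) ↔ a = b := by
  have hsq : Real.sqrt 2 ^ 2 = 2 := Real.sq_sqrt (by norm_num)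
  have h2 : (0:ℝ) < Real.sqrt 2 := Real.sqrt_pos.mpr (by norm_num)
  constructor
  · intro h
    have := congrArg (· ^ 2) h
    rw [Real.sq_sqrt (by positivity)] at this
    have h3 : ((1 / Real.sqrt 2) * (a + b)) ^ 2 = (a+b)^2 / 2 := by
      field_simp
      rw [hsq]; ring
    rw [h3] at this
    nlinarith [sq_nonneg (a - b)]
  · rintro rfl
    rw [show a^2 + a^2 = (Real.sqrt 2 * a)^2 by nlinarith [hsq],
      Real.sqrt_sq (by positivity)]
    field_simp
    nlinarith [hsq]

theorem stmt17 {V : Type*} [Fintype V] (G : SimpleGraph V)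
    (hE : G.edgeFinset.Nonempty) :
    (1 / Real.sqrt 2) * M1 G ≤ SO G ∧ SO G < M1 G ∧
    ((1 / Real.sqrt 2) * M1 G = SO G ↔
      ∀ u v : V, G.Adj u v → G.degree u = G.degree v) := by
  set L : Sym2 V → ℝ := Sym2.lift ⟨fun u v => (G.degree u : ℝ) + G.degree v,
    fun u v => by simp [add_comm]⟩ with hL
  set S : Sym2 V → ℝ := Sym2.lift ⟨fun u v =>
      Real.sqrt ((G.degree u : ℝ) ^ 2 + (G.degree v : ℝ) ^ 2),
    fun u v => by simp only [add_comm]⟩ with hS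
  have hM1 : M1 G = ∑ e ∈ G.edgeFinset, L e := aux_M1_eq G
  have hSO : SO G = ∑ e ∈ G.edgeFinset, S e := rfl
  have hle : ∀ e ∈ G.edgeFinset, (1 / Real.sqrt 2) * L e ≤ S e := by
    intro e he
    induction e using Sym2.ind with
    | _ u v =>
      simp only [hL, hS, Sym2.lift_mk]
      exact aux_pt_le (by positivity) (by positivity)
  have hadj : ∀ u v : V, s(u, v) ∈ G.edgeFinset → G.Adj u v := by
    intro u v h
    rwa [SimpleGraph.mem_edgeFinset, SimpleGraph.mem_edgeSet] at h
  refine ⟨?_, ?_, ?_⟩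
  · rw [hM1, hSO, Finset.mul_sum]
    exact Finset.sum_le_sum hle
  · rw [hM1, hSO]
    refine Finset.sum_lt_sum_of_nonempty hE ?_
    intro e he
    induction e using Sym2.ind with
    | _ u v =>
      have h := hadj u v he
      have hu : 0 < G.degree u := G.degree_pos_iff_exists_adj u |>.mpr ⟨v, h⟩
      have hv : 0 < G.degree v := G.degree_pos_iff_exists_adj v |>.mpr ⟨u, h.symm⟩
      simp only [hL, hS, Sym2.lift_mk]
      exact aux_pt_lt (by exact_mod_cast hu) (by exact_mod_cast hv)
  · rw [hM1, hSO, Finset.mul_sum, Finset.sum_eq_sum_iff_of_le hle]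
    constructor
    · intro h u v huv
      have he : s(u, v) ∈ G.edgeFinset := by
        rwa [SimpleGraph.mem_edgeFinset, SimpleGraph.mem_edgeSet]
      have := h _ he
      simp only [hL, hS, Sym2.lift_mk] at this
      exact_mod_cast (aux_pt_eq (by positivity) (by positivity)).mp this
    · intro h e he
      induction e using Sym2.ind with
      | _ u v =>
        have hd := h u v (hadj u v he)
        simp only [hL, hS, Sym2.lift_mk, hd]
        exact (aux_pt_eq (by positivity) (by positivity)).mpr rfl
end
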